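/- arXiv:2311.03962 — 2 statements merged into one kernel-verified Lean document; each statement's English description precedes it below -/
import Mathlib

section
/- Let F be a field of characteristic 2 and let V be an inner product space over F. If F is finite, assume dim_F V = 3. Then any two orthogonal bases of V are chain equivalent over F. -/
open Function TensorProduct

/-- `(V, B)` is an inner product space over the commutative ring `R`: `V` is a
finite rank free `R`-module and `B` is a non-degenerate symmetric bilinear form on `V`
(non-degenerate: the induced map `V → Hom_R(V, R)` is bijective). -/
structure IsInnerProductSpace (R : Type*) [CommRing R] (V : Type*) [AddCommGroup V]
    [Module R V] (B : LinearMap.BilinForm R V) : Prop where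
  free : Module.Free R V
  finite : Module.Finite R V
  symm : ∀ x y, B x y = B y x
  nondegenerate : Function.Bijective B

section IPSDefs

variable {R : Type*} [CommRing R] {V : Type*} [AddCommGroup V] [Module R V]

/-- A basis `b` of `V` is an orthogonal basis for the bilinear form `B` if
`B (b i) (b j) = 0` for all `i ≠ j`. -/
def IsOrthoBasis {n : ℕ} (B : LinearMap.BilinForm R V) (b : Module.Basis (Fin n) R V) : Prop :=
  ∀ i j, i ≠ j → B (b i) (b j) = 0

/-- Two orthogonal bases `b`, `c` of `V` are chain equivalent if there is a sequence
`s 0, …, s r` of orthogonal bases of `V` with `s 0 = b`, `s r = c` and consecutive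
bases sharing at least `n - 2` basis vectors. -/
def ChainEquiv {n : ℕ} (B : LinearMap.BilinForm R V) (b c : Module.Basis (Fin n) R V) : Prop :=
  ∃ (r : ℕ) (s : Fin (r + 1) → Module.Basis (Fin n) R V),
    (∀ i, IsOrthoBasis B (s i)) ∧ s 0 = b ∧ s (Fin.last r) = c ∧
    ∀ i : Fin r, n - 2 ≤ (Set.range (s i.castSucc) ∩ Set.range (s i.succ)).ncard

end IPSDefs

section ChainLemmaProof

open Finset
set_option linter.unusedSectionVars false
set_option maxHeartbeats 1000000

variable {F : Type*} [Field F] [CharP F 2] {V : Type*} [AddCommGroup V] [Module F V]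
variable {n : ℕ} {B : LinearMap.BilinForm F V}

lemma expand_left (b : Module.Basis (Fin n) F V) (f : Fin n → F) (y : V) :
    B (∑ i, f i • b i) y = ∑ i, f i * B (b i) y := by
  rw [map_sum, LinearMap.sum_apply]
  exact Finset.sum_congr rfl fun i _ => by rw [map_smul, LinearMap.smul_apply, smul_eq_mul]

lemma expand_right (x : V) (b : Module.Basis (Fin n) F V) (g : Fin n → F) :
    B x (∑ i, g i • b i) = ∑ i, g i * B x (b i) := by
  rw [map_sum]
  exact Finset.sum_congr rfl fun i _ => by rw [map_smul, smul_eq_mul]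

lemma ortho_expand {b : Module.Basis (Fin n) F V} (hb : IsOrthoBasis B b) (f g : Fin n → F) :
    B (∑ i, f i • b i) (∑ i, g i • b i) = ∑ i, f i * g i * B (b i) (b i) := by
  rw [expand_left]
  refine Finset.sum_congr rfl fun i _ => ?_
  rw [expand_right]
  rw [Finset.mul_sum, Finset.sum_eq_single i]
  · ring
  · intro j _ hj
    rw [hb i j (Ne.symm hj)]
    ring
  · intro h; exact absurd (Finset.mem_univ i) h

/-- `B x (b i) = (coord of x at i) * d i` for any expansion of x. -/
lemma expand_coord {b : Module.Basis (Fin n) F V} (hb : IsOrthoBasis B b) (f : Fin n → F) (i : Fin n) :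
    B (∑ k, f k • b k) (b i) = f i * B (b i) (b i) := by
  rw [expand_left, Finset.sum_eq_single i]
  · intro j _ hj; rw [hb j i hj]; ring
  · intro h; exact absurd (Finset.mem_univ i) h

lemma diag_ne (hnd : ∀ x : V, (∀ y, B x y = 0) → x = 0)
    {b : Module.Basis (Fin n) F V} (hb : IsOrthoBasis B b) (i : Fin n) :
    B (b i) (b i) ≠ 0 := by
  intro h0
  refine b.ne_zero i (hnd _ fun y => ?_)
  have hy := b.sum_repr y
  calc B (b i) y = B (b i) (∑ k, b.repr y k • b k) := by rw [hy]
    _ = ∑ k, b.repr y k * B (b i) (b k) := expand_right _ _ _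
    _ = 0 := by
        refine Finset.sum_eq_zero fun k _ => ?_
        rcases eq_or_ne i k with rfl | hik
        · rw [h0]; ring
        · rw [hb i k hik]; ring


lemma chain_single {b c : Module.Basis (Fin n) F V} (hb : IsOrthoBasis B b) (hc : IsOrthoBasis B c)
    (h : n - 2 ≤ (Set.range b ∩ Set.range c).ncard) : ChainEquiv B b c := by
  refine ⟨1, ![b, c], ?_, rfl, rfl, ?_⟩
  · intro i
    fin_cases i <;> simpa
  · intro i
    fin_cases i
    simpa using h

lemma chain_of_agree {b c : Module.Basis (Fin n) F V} (hb : IsOrthoBasis B b) (hc : IsOrthoBasis B c)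
    (E : Finset (Fin n)) (hcard : n - 2 ≤ E.card) (hagree : ∀ k ∈ E, b k = c k) :
    ChainEquiv B b c := by
  have hsub : (b '' ↑E) ⊆ Set.range b ∩ Set.range c := by
    rintro - ⟨k, hk, rfl⟩
    exact ⟨⟨k, rfl⟩, ⟨k, (hagree k hk).symm⟩⟩
  have hle := Set.ncard_le_ncard hsub ((Set.finite_range b).inter_of_left _)
  rw [Set.ncard_image_of_injective _ b.injective, Set.ncard_coe_finset] at hle
  exact chain_single hb hc (le_trans hcard hle)

lemma chain_refl {b : Module.Basis (Fin n) F V} (hb : IsOrthoBasis B b) : ChainEquiv B b b :=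
  chain_of_agree hb hb Finset.univ (by simp) (fun _ _ => rfl)

lemma chain_trans {b c d : Module.Basis (Fin n) F V} (h1 : ChainEquiv B b c) (h2 : ChainEquiv B c d) :
    ChainEquiv B b d := by
  obtain ⟨r₁, s₁, ho₁, hs₁, he₁, hstep₁⟩ := h1
  obtain ⟨r₂, s₂, ho₂, hs₂, he₂, hstep₂⟩ := h2
  refine ⟨r₁ + r₂, fun i => if h : (i : ℕ) ≤ r₁ then s₁ ⟨i, by omega⟩
    else s₂ ⟨(i : ℕ) - r₁, by have := i.isLt; omega⟩, ?_, ?_, ?_, ?_⟩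
  · intro i
    by_cases h : (i : ℕ) ≤ r₁ <;> simp only [h, dite_true, dite_false] <;>
      [exact ho₁ _; exact ho₂ _]
  · simp only [Fin.val_zero, Nat.zero_le, dite_true]
    rw [← hs₁]
    congr 1
  · simp only [Fin.val_last]
    by_cases h : r₁ + r₂ ≤ r₁
    · have hr2 : r₂ = 0 := by omega
      subst hr2
      simp only [h, dite_true]
      have e1 : (⟨r₁ + 0, by omega⟩ : Fin (r₁+1)) = Fin.last r₁ := Fin.ext (by simp)
      rw [e1, he₁, ← he₂, ← hs₂]
      congr 1
    · simp only [h, dite_false]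
      have e1 : (⟨r₁ + r₂ - r₁, by omega⟩ : Fin (r₂+1)) = Fin.last r₂ := Fin.ext (by simp)
      rw [e1, he₂]
  · intro i
    simp only [Fin.coe_castSucc, Fin.val_succ]
    by_cases h1' : (i : ℕ) + 1 ≤ r₁
    · have h0 : (i : ℕ) ≤ r₁ := by omega
      simp only [h0, h1', dite_true]
      have e1 : (⟨(i:ℕ), by omega⟩ : Fin (r₁+1)) = (⟨(i:ℕ), by omega⟩ : Fin r₁).castSucc :=
        Fin.ext rfl
      have e2 : (⟨(i:ℕ)+1, by omega⟩ : Fin (r₁+1)) = (⟨(i:ℕ), by omega⟩ : Fin r₁).succ :=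
        Fin.ext rfl
      rw [e1, e2]
      exact hstep₁ _
    · by_cases h0 : (i : ℕ) ≤ r₁
      · have hi : (i : ℕ) = r₁ := by omega
        have hr2 : 0 < r₂ := by have := i.isLt; omega
        simp only [h0, h1', dite_true, dite_false]
        have e1 : (⟨(i:ℕ), by omega⟩ : Fin (r₁+1)) = Fin.last r₁ := Fin.ext (by simp [hi])
        have e2 : (⟨(i:ℕ)+1-r₁, by have := i.isLt; omega⟩ : Fin (r₂+1))
            = (⟨0, hr2⟩ : Fin r₂).succ := Fin.ext (by simp [hi])
        have e3 : s₂ (⟨0, hr2⟩ : Fin r₂).castSucc = s₂ 0 := by congr 1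
        rw [e1, he₁, e2, ← hs₂, ← e3]
        exact hstep₂ _
      · simp only [h0, h1', dite_false]
        have hlt : (i:ℕ) - r₁ < r₂ := by have := i.isLt; omega
        have e1 : (⟨(i:ℕ)-r₁, by have := i.isLt; omega⟩ : Fin (r₂+1))
            = (⟨(i:ℕ)-r₁, hlt⟩ : Fin r₂).castSucc := Fin.ext rfl
        have e2 : (⟨(i:ℕ)+1-r₁, by have := i.isLt; omega⟩ : Fin (r₂+1))
            = (⟨(i:ℕ)-r₁, hlt⟩ : Fin r₂).succ := Fin.ext (by simp [Fin.succ]; omega)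
        rw [e1, e2]
        exact hstep₂ _

lemma sum_split_two {M : Type*} [AddCommMonoid M] {i j : Fin n} (hij : i ≠ j) (g : Fin n → M) :
    ∑ k, g k = g i + g j + ∑ k ∈ (univ.erase i).erase j, g k := by
  rw [← Finset.add_sum_erase _ g (mem_univ i),
    ← Finset.add_sum_erase _ g (Finset.mem_erase.mpr ⟨Ne.symm hij, mem_univ j⟩), add_assoc]

lemma move {b : Module.Basis (Fin n) F V} (hb : IsOrthoBasis B b)
    {i j : Fin n} (hij : i ≠ j) (α β : F)
    (hQ : α^2 * B (b i) (b i) + β^2 * B (b j) (b j) ≠ 0) :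
    ∃ b' : Module.Basis (Fin n) F V, IsOrthoBasis B b' ∧ ChainEquiv B b b' ∧
      b' i = α • b i + β • b j ∧ (∀ k, k ≠ i → k ≠ j → b' k = b k) ∧
      B (b' i) (b' i) = α^2 * B (b i) (b i) + β^2 * B (b j) (b j) ∧
      B (b' j) (b' j) = B (b i) (b i) * B (b j) (b j)
        * (α^2 * B (b i) (b i) + β^2 * B (b j) (b j)) ∧
      (∀ cf : Fin n → F, ∑ k, cf k • b k = ∑ k,
        (if k = i then (cf i * α * B (b i) (b i) + cf j * β * B (b j) (b j))
            / (α^2 * B (b i) (b i) + β^2 * B (b j) (b j))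
         else if k = j then (cf i * β + cf j * α)
            / (α^2 * B (b i) (b i) + β^2 * B (b j) (b j))
         else cf k) • b' k) ∧
      ∀ S : Set (Fin n), i ∈ S → j ∈ S →
        Submodule.span F (⇑b' '' S) = Submodule.span F (⇑b '' S) := by
  classical
  have h2 : (2 : F) = 0 := CharTwo.two_eq_zero
  set di := B (b i) (b i) with hdi
  set dj := B (b j) (b j) with hdj
  set Q := α^2 * di + β^2 * dj with hQdef
  set u := α • b i + β • b j with hu
  set w := (β * dj) • b i + (α * di) • b j with hw
  have expand1 : ∀ x y : F, x • u + y • w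
      = (x*α + y*(β*dj)) • b i + (x*β + y*(α*di)) • b j := by
    intro x y
    rw [hu, hw]
    module
  have hu_i : (α*di) • u + β • w = Q • b i := by
    rw [expand1, show α*di*α + β*(β*dj) = Q by rw [hQdef]; ring,
      show α*di*β + β*(α*di) = (0:F) by linear_combination (α*β*di) * h2, zero_smul, add_zero]
  have hu_j : (β*dj) • u + α • w = Q • b j := by
    rw [expand1, show β*dj*α + α*(β*dj) = (0:F) by linear_combination (α*β*dj) * h2,
      show β*dj*β + α*(α*di) = Q by rw [hQdef]; ring, zero_smul, zero_add]
  set f : Fin n → V := fun k => if k = i then u else if k = j then w else b k with hf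
  have : FiniteDimensional F V := Module.Finite.of_basis b
  set T : V →ₗ[F] V := b.constr F f with hT
  have hTb : ∀ k, T (b k) = f k := fun k => b.constr_basis F f k
  have hTi : T (b i) = u := by rw [hTb]; simp [hf]
  have hTj : T (b j) = w := by rw [hTb]; simp [hf, Ne.symm hij]
  have hmem : ∀ k, b k ∈ LinearMap.range T := by
    intro k
    by_cases hk : k = i
    · subst hk
      refine ⟨Q⁻¹ • ((α*di) • b k + β • b j), ?_⟩
      rw [map_smul, map_add, map_smul, map_smul, hTi, hTj, hu_i, smul_smul,
        inv_mul_cancel₀ hQ, one_smul]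
    by_cases hk' : k = j
    · subst hk'
      refine ⟨Q⁻¹ • ((β*dj) • b i + α • b k), ?_⟩
      rw [map_smul, map_add, map_smul, map_smul, hTi, hTj, hu_j, smul_smul,
        inv_mul_cancel₀ hQ, one_smul]
    · exact ⟨b k, by rw [hTb]; simp [hf, hk, hk']⟩
  have hsurj : Surjective T := by
    rw [← LinearMap.range_eq_top]
    refine le_antisymm le_top ?_
    rw [← b.span_eq, Submodule.span_le]
    rintro - ⟨k, rfl⟩
    exact hmem k
  have hinj : Injective T := (LinearMap.injective_iff_surjective).mpr hsurj
  set e := LinearEquiv.ofBijective T ⟨hinj, hsurj⟩ with he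
  have hb' : ∀ k, (b.map e) k = f k := by
    intro k
    rw [Module.Basis.map_apply]
    exact hTb k
  have hbi' : (b.map e) i = u := by rw [hb']; simp [hf]
  have hbj' : (b.map e) j = w := by rw [hb']; simp [hf, Ne.symm hij]
  have hbk' : ∀ k, k ≠ i → k ≠ j → (b.map e) k = b k := by
    intro k hk hk'; rw [hb']; simp [hf, hk, hk']
  -- bilinear facts
  have hBuu : B u u = Q := by
    rw [hu, hQdef]
    simp only [map_add, map_smul, LinearMap.add_apply, LinearMap.smul_apply, smul_eq_mul,
      hb i j hij, hb j i (Ne.symm hij), ← hdi, ← hdj]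
    ring
  have hBww : B w w = di * dj * Q := by
    rw [hw, hQdef]
    simp only [map_add, map_smul, LinearMap.add_apply, LinearMap.smul_apply, smul_eq_mul,
      hb i j hij, hb j i (Ne.symm hij), ← hdi, ← hdj]
    ring
  have hBuw : B u w = 0 := by
    rw [hu, hw]
    simp only [map_add, map_smul, LinearMap.add_apply, LinearMap.smul_apply, smul_eq_mul,
      hb i j hij, hb j i (Ne.symm hij), ← hdi, ← hdj]
    linear_combination (α*β*di*dj) * h2
  have hBwu : B w u = 0 := by
    rw [hu, hw]
    simp only [map_add, map_smul, LinearMap.add_apply, LinearMap.smul_apply, smul_eq_mul,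
      hb i j hij, hb j i (Ne.symm hij), ← hdi, ← hdj]
    linear_combination (α*β*di*dj) * h2
  have hBuk : ∀ k, k ≠ i → k ≠ j → B u (b k) = 0 ∧ B (b k) u = 0 := by
    intro k hk hk'
    constructor <;>
    · rw [hu]
      simp [map_add, map_smul, hb i k (Ne.symm hk), hb j k (Ne.symm hk'), hb k i hk, hb k j hk']
  have hBwk : ∀ k, k ≠ i → k ≠ j → B w (b k) = 0 ∧ B (b k) w = 0 := by
    intro k hk hk'
    constructor <;>
    · rw [hw]
      simp [map_add, map_smul, hb i k (Ne.symm hk), hb j k (Ne.symm hk'), hb k i hk, hb k j hk']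
  have hortho : IsOrthoBasis B (b.map e) := by
    intro k l hkl
    by_cases hk : k = i
    · subst hk
      rw [hbi']
      by_cases hl : l = j
      · subst hl; rw [hbj']; exact hBuw
      · rw [hbk' l (Ne.symm hkl) hl]; exact (hBuk l (Ne.symm hkl) hl).1
    by_cases hk' : k = j
    · subst hk'
      rw [hbj']
      by_cases hl : l = i
      · subst hl; rw [hbi']; exact hBwu
      · rw [hbk' l hl (Ne.symm hkl)]; exact (hBwk l hl (Ne.symm hkl)).2.symm ▸ (hBwk l hl (Ne.symm hkl)).1
    · rw [hbk' k hk hk']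
      by_cases hl : l = i
      · subst hl; rw [hbi']; exact (hBuk k hk hk').2
      by_cases hl' : l = j
      · subst hl'; rw [hbj']; exact (hBwk k hk hk').2
      · rw [hbk' l hl hl']; exact hb k l hkl
  refine ⟨b.map e, hortho, ?_, hbi', hbk', ?_, ?_, ?_, ?_⟩
  · -- chain equivalence
    refine chain_of_agree hb hortho ((univ.erase i).erase j) ?_ ?_
    · rw [Finset.card_erase_of_mem (Finset.mem_erase.mpr ⟨Ne.symm hij, mem_univ j⟩),
        Finset.card_erase_of_mem (mem_univ i), Finset.card_univ, Fintype.card_fin]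
      omega
    · intro k hk
      rw [Finset.mem_erase, Finset.mem_erase] at hk
      exact (hbk' k hk.2.1 hk.1).symm
  · rw [hbi']; exact hBuu
  · rw [hbj']; exact hBww
  · -- coordinate transformation
    intro cf
    rw [sum_split_two hij (fun k => cf k • b k), sum_split_two hij]
    have hE : ∀ k ∈ (univ.erase i).erase j,
        (if k = i then (cf i * α * di + cf j * β * dj) / Q
         else if k = j then (cf i * β + cf j * α) / Q else cf k) • (b.map e) k = cf k • b k := by
      intro k hk
      rw [Finset.mem_erase, Finset.mem_erase] at hk
      rw [if_neg hk.2.1, if_neg hk.1, hbk' k hk.2.1 hk.1]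
    rw [Finset.sum_congr rfl hE]
    simp only [eq_self_iff_true, if_true, if_neg hij, if_neg (Ne.symm hij)]
    congr 1
    rw [hbi', hbj', expand1]
    have c1 : (cf i * α * di + cf j * β * dj) / Q * α + (cf i * β + cf j * α) / Q * (β * dj)
        = cf i := by
      field_simp
      linear_combination (cf j * α * β * dj) * h2
    have c2 : (cf i * α * di + cf j * β * dj) / Q * β + (cf i * β + cf j * α) / Q * (α * di)
        = cf j := by
      field_simp
      linear_combination (cf i * α * β * di) * h2
    rw [c1, c2]
  · -- span preservation
    intro S hiS hjS
    apply le_antisymm <;> rw [Submodule.span_le] <;> rintro - ⟨kk, hkk, rfl⟩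
    · by_cases hk : kk = i
      · rw [hk, hbi']
        exact Submodule.add_mem _
          (Submodule.smul_mem _ _ (Submodule.subset_span ⟨i, hiS, rfl⟩))
          (Submodule.smul_mem _ _ (Submodule.subset_span ⟨j, hjS, rfl⟩))
      by_cases hk' : kk = j
      · rw [hk', hbj', hw]
        exact Submodule.add_mem _
          (Submodule.smul_mem _ _ (Submodule.subset_span ⟨i, hiS, rfl⟩))
          (Submodule.smul_mem _ _ (Submodule.subset_span ⟨j, hjS, rfl⟩))
      · rw [hbk' kk hk hk']
        exact Submodule.subset_span ⟨kk, hkk, rfl⟩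
    · by_cases hk : kk = i
      · have : b i = Q⁻¹ • ((α*di) • (b.map e) i + β • (b.map e) j) := by
          rw [hbi', hbj', hu_i, smul_smul, inv_mul_cancel₀ hQ, one_smul]
        rw [hk, this]
        exact Submodule.smul_mem _ _ (Submodule.add_mem _
          (Submodule.smul_mem _ _ (Submodule.subset_span ⟨i, hiS, rfl⟩))
          (Submodule.smul_mem _ _ (Submodule.subset_span ⟨j, hjS, rfl⟩)))
      by_cases hk' : kk = j
      · have : b j = Q⁻¹ • ((β*dj) • (b.map e) i + α • (b.map e) j) := by
          rw [hbi', hbj', hu_j, smul_smul, inv_mul_cancel₀ hQ, one_smul]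
        rw [hk', this]
        exact Submodule.smul_mem _ _ (Submodule.add_mem _
          (Submodule.smul_mem _ _ (Submodule.subset_span ⟨i, hiS, rfl⟩))
          (Submodule.smul_mem _ _ (Submodule.subset_span ⟨j, hjS, rfl⟩)))
      · rw [← hbk' kk hk hk']
        exact Submodule.subset_span ⟨kk, hkk, rfl⟩

lemma span_coords {b : Module.Basis (Fin n) F V} {S : Finset (Fin n)} {x : V}
    (hx : x ∈ Submodule.span F (⇑b '' ↑S)) :
    ∃ xa : Fin n → F, (∀ i ∉ S, xa i = 0) ∧ x = ∑ i, xa i • b i := by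
  classical
  induction hx using Submodule.span_induction with
  | mem y hy =>
    obtain ⟨i, hiS, rfl⟩ := hy
    refine ⟨fun k => if k = i then 1 else 0, ?_, ?_⟩
    · intro l hl
      simp only [ite_eq_right_iff, one_ne_zero]
      intro h; subst h; exact absurd hiS hl
    · simp
  | zero => exact ⟨0, by simp, by simp⟩
  | add y z _ _ hy hz =>
    obtain ⟨ya, hy0, rfl⟩ := hy
    obtain ⟨za, hz0, rfl⟩ := hz
    refine ⟨ya + za, fun i hi => by simp [hy0 i hi, hz0 i hi], ?_⟩
    rw [← Finset.sum_add_distrib]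
    exact Finset.sum_congr rfl fun i _ => by simp [add_smul]
  | smul c y _ hy =>
    obtain ⟨ya, hy0, rfl⟩ := hy
    refine ⟨c • ya, fun i hi => by simp [hy0 i hi], ?_⟩
    rw [Finset.smul_sum]
    exact Finset.sum_congr rfl fun i _ => by simp [smul_smul]

lemma move_one {b : Module.Basis (Fin n) F V} (hb : IsOrthoBasis B b) (i : Fin n) {γ : F} (hγ : γ ≠ 0) :
    ∃ b' : Module.Basis (Fin n) F V, IsOrthoBasis B b' ∧ ChainEquiv B b b' ∧ b' i = γ • b i ∧
      ∀ k, k ≠ i → b' k = b k := by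
  classical
  set g : Fin n → Fˣ := fun k => if k = i then Units.mk0 γ hγ else 1 with hg
  have happ : ∀ k, (b.unitsSMul g) k = (g k : F) • b k := fun k => Module.Basis.unitsSMul_apply ..
  have hval : ∀ k, k ≠ i → (b.unitsSMul g) k = b k := by
    intro k hk; rw [happ, hg]; simp [hk]
  have hortho : IsOrthoBasis B (b.unitsSMul g) := by
    intro k l hkl
    rw [happ, happ]
    simp [hb k l hkl]
  refine ⟨b.unitsSMul g, hortho, ?_, ?_, hval⟩
  · refine chain_of_agree hb hortho (univ.erase i) ?_ ?_
    · rw [Finset.card_erase_of_mem (mem_univ i), Finset.card_univ, Fintype.card_fin]; omega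
    · intro k hk; exact (hval k (Finset.mem_erase.mp hk).1).symm
  · rw [happ, hg]; simp
lemma char2_eq_of_add_eq_zero {x y : F} (h : x + y = 0) : x = y :=
  (eq_neg_of_add_eq_zero_left h).trans (CharTwo.neg_eq y)

open scoped Classical in
lemma insert_lemma (hnd : ∀ x : V, (∀ y, B x y = 0) → x = 0)
    (Hμ : (∃ x : F, x ≠ 0 ∧ x ≠ 1) ∨ n ≤ 3) (v : V) (hq : B v v ≠ 0) :
    ∀ (k : ℕ) (b : Module.Basis (Fin n) F V), IsOrthoBasis B b → ∀ (S : Finset (Fin n))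
      (a : Fin n → F), v = ∑ i, a i • b i → (∀ i ∉ S, a i = 0) →
      (univ.filter fun i => a i ≠ 0).card ≤ k →
      (2 ≤ S.card → ∃ x ∈ Submodule.span F (⇑b '' ↑S), (B v x)^2 ≠ B v v * B x x) →
    ∃ b' : Module.Basis (Fin n) F V, IsOrthoBasis B b' ∧ ChainEquiv B b b' ∧
      v ∈ Set.range b' ∧ ∀ l ∉ S, b' l = b l := by
  classical
  have h2 : (2 : F) = 0 := CharTwo.two_eq_zero
  intro k
  induction k using Nat.strong_induction_on with
  | _ k IH =>
  intro b hb S a hv hS hk hbad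
  set supp := univ.filter fun i => a i ≠ 0 with hsupp
  have hsuppS : supp ⊆ S := by
    intro i hi
    rw [hsupp, Finset.mem_filter] at hi
    by_contra h
    exact hi.2 (hS i h)
  have hd : ∀ i, B (b i) (b i) ≠ 0 := diag_ne hnd hb
  have hqv : B v v = ∑ i, a i * a i * B (b i) (b i) := by
    rw [hv]; exact ortho_expand hb a a
  rcases Nat.lt_or_ge supp.card 2 with hcard2 | hcard2
  · rcases Nat.lt_or_ge supp.card 1 with hcard1 | hcard1
    · -- supp empty : contradiction
      exfalso
      apply hq
      have hz : ∀ i, a i = 0 := by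
        intro i
        by_contra h
        have : i ∈ supp := Finset.mem_filter.mpr ⟨mem_univ _, h⟩
        have := Finset.card_pos.mpr ⟨i, this⟩
        omega
      have : v = 0 := by
        rw [hv]
        exact Finset.sum_eq_zero fun i _ => by rw [hz i, zero_smul]
      rw [this]
      simp
    · -- supp = {i0}
      have h1 : supp.card = 1 := by omega
      obtain ⟨i0, hi0⟩ := Finset.card_eq_one.mp h1
      have hi0supp : i0 ∈ supp := by rw [hi0]; exact Finset.mem_singleton_self i0
      have hai0 : a i0 ≠ 0 := (Finset.mem_filter.mp hi0supp).2
      have hvv : v = a i0 • b i0 := by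
        rw [hv]
        rw [Finset.sum_eq_single i0]
        · intro j _ hj
          have : a j = 0 := by
            by_contra h
            have : j ∈ supp := Finset.mem_filter.mpr ⟨mem_univ _, h⟩
            rw [hi0, Finset.mem_singleton] at this
            exact hj this
          rw [this, zero_smul]
        · intro h; exact absurd (mem_univ i0) h
      obtain ⟨b', ho', hch', hb'i, hb'o⟩ := move_one hb i0 hai0
      refine ⟨b', ho', hch', ⟨i0, by rw [hb'i, hvv]⟩, fun l hl => hb'o l ?_⟩
      intro h; subst h
      exact hl (hsuppS hi0supp)
  · -- supp.card ≥ 2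
    by_cases hA : ∃ i ∈ supp, ∃ j ∈ supp,
        (a i)^2 * B (b i) (b i) ≠ (a j)^2 * B (b j) (b j)
    · -- merge case
      obtain ⟨i, hi, j, hj, hne⟩ := hA
      have hij : i ≠ j := by rintro rfl; exact hne rfl
      have hQne : (a i)^2 * B (b i) (b i) + (a j)^2 * B (b j) (b j) ≠ 0 := by
        intro h
        exact hne (char2_eq_of_add_eq_zero h)
      obtain ⟨b₁, ho₁, hch₁, hb1i, hb1o, hd1i, hd1j, htr₁, hspan₁⟩ := move hb hij (a i) (a j) hQne
      obtain ⟨a₁, hv₁, ha₁i, ha₁j, ha₁o⟩ : ∃ a₁ : Fin n → F,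
          v = ∑ kk, a₁ kk • b₁ kk ∧ a₁ i = 1 ∧ a₁ j = 0 ∧
          ∀ kk, kk ≠ i → kk ≠ j → a₁ kk = a kk := by
        refine ⟨fun kk => if kk = i then
            (a i * a i * B (b i) (b i) + a j * a j * B (b j) (b j))
              / ((a i)^2 * B (b i) (b i) + (a j)^2 * B (b j) (b j))
          else if kk = j then (a i * a j + a j * a i)
              / ((a i)^2 * B (b i) (b i) + (a j)^2 * B (b j) (b j))
          else a kk, by rw [hv]; exact htr₁ a, ?_, ?_, ?_⟩
        · beta_reduce
          rw [if_pos rfl, div_eq_one_iff_eq hQne]; ring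
        · beta_reduce
          rw [if_neg (Ne.symm hij), if_pos rfl, div_eq_zero_iff]
          left; linear_combination (a i * a j) * h2
        · intro kk h1 h3
          beta_reduce
          rw [if_neg h1, if_neg h3]
      have hsupp₁ : (univ.filter fun kk => a₁ kk ≠ 0) ⊆ supp.erase j := by
        intro m hm
        rw [Finset.mem_filter] at hm
        rcases eq_or_ne m i with rfl | hmi
        · exact Finset.mem_erase.mpr ⟨hij, hi⟩
        rcases eq_or_ne m j with rfl | hmj
        · exact absurd ha₁j hm.2
        · rw [ha₁o m hmi hmj] at hm
          exact Finset.mem_erase.mpr ⟨hmj, Finset.mem_filter.mpr ⟨mem_univ _, hm.2⟩⟩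
      have hiS := hsuppS hi
      have hjS := hsuppS hj
      have hk₁ : (univ.filter fun kk => a₁ kk ≠ 0).card ≤ k - 1 := by
        have := Finset.card_le_card hsupp₁
        rw [Finset.card_erase_of_mem hj] at this
        omega
      have hS₁ : ∀ l ∉ S, a₁ l = 0 := by
        intro l hl
        rw [ha₁o l (fun h => hl (h ▸ hiS)) (fun h => hl (h ▸ hjS))]
        exact hS l hl
      have hbad₁ : 2 ≤ S.card → ∃ x ∈ Submodule.span F (⇑b₁ '' ↑S),
          (B v x)^2 ≠ B v v * B x x := by
        intro hh
        obtain ⟨x, hx, hne'⟩ := hbad hh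
        exact ⟨x, by rw [hspan₁ ↑S hiS hjS]; exact hx, hne'⟩
      obtain ⟨b₂, ho₂, hch₂, hvmem, hout₂⟩ :=
        IH (k-1) (by omega) b₁ ho₁ S a₁ hv₁ hS₁ hk₁ hbad₁
      refine ⟨b₂, ho₂, chain_trans hch₁ hch₂, hvmem, fun l hl => ?_⟩
      rw [hout₂ l hl, hb1o l (fun h => hl (h ▸ hiS)) (fun h => hl (h ▸ hjS))]
    · -- all t-values equal
      push_neg at hA
      obtain ⟨i0, hi0⟩ := Finset.card_pos.mp (by omega : 0 < supp.card)
      have hai0 : a i0 ≠ 0 := (Finset.mem_filter.mp hi0).2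
      have ht0 : (a i0)^2 * B (b i0) (b i0) ≠ 0 :=
        mul_ne_zero (pow_ne_zero _ hai0) (hd i0)
      have hsum : B v v = (supp.card : F) * ((a i0)^2 * B (b i0) (b i0)) := by
        rw [hqv, ← Finset.sum_subset (Finset.subset_univ supp) (fun x _ hx => by
          have hx0 : a x = 0 := by
            by_contra hh; exact hx (Finset.mem_filter.mpr ⟨mem_univ _, hh⟩)
          rw [hx0]; ring)]
        rw [Finset.sum_congr rfl (fun i hi =>
          (by rw [← hA i hi i0 hi0]; ring :
            a i * a i * B (b i) (b i) = (a i0)^2 * B (b i0) (b i0))),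
          Finset.sum_const, nsmul_eq_mul]
      have hodd : ¬ 2 ∣ supp.card := by
        intro hdvd
        exact hq (by rw [hsum, (CharP.cast_eq_zero_iff F 2 _).mpr hdvd, zero_mul])
      have hcast : ((supp.card : ℕ) : F) = 1 := by
        obtain ⟨m, hm⟩ : ∃ m, supp.card = 2*m+1 := ⟨supp.card/2, by omega⟩
        rw [hm]; push_cast; rw [h2]; ring
      have hqvt : B v v = (a i0)^2 * B (b i0) (b i0) := by rw [hsum, hcast, one_mul]
      have h3 : 3 ≤ supp.card := by
        rcases Nat.even_or_odd supp.card with he | ho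
        · exact absurd he.two_dvd hodd
        · omega
      by_cases hex : ∃ jj ∈ S, jj ∉ supp
      · -- B1 : outside index available, μ-trick
        obtain ⟨jj, hjjS, hjjns⟩ := hex
        have hajj : a jj = 0 := by
          by_contra hh; exact hjjns (Finset.mem_filter.mpr ⟨mem_univ _, hh⟩)
        have hi0jj : i0 ≠ jj := fun h => hjjns (h ▸ hi0)
        -- choose μ
        obtain ⟨μ, hμ0, hμQ⟩ : ∃ μ : F, μ ≠ 0 ∧
            B (b i0) (b i0) + μ^2 * B (b jj) (b jj) ≠ 0 := by
          obtain ⟨x0, hx00, hx01⟩ : ∃ x : F, x ≠ 0 ∧ x ≠ 1 := by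
            rcases Hμ with h | hn3
            · exact h
            · exfalso
              have hins : insert jj supp ⊆ S := by
                intro y hy
                rcases Finset.mem_insert.mp hy with rfl | hy'
                · exact hjjS
                · exact hsuppS hy'
              have hc1 : supp.card + 1 ≤ S.card := by
                rw [← Finset.card_insert_of_notMem hjjns]
                exact Finset.card_le_card hins
              have hc2 : S.card ≤ n := by
                have := Finset.card_le_univ S
                simpa using this
              omega
          by_cases hone : B (b i0) (b i0) + B (b jj) (b jj) ≠ 0
          · exact ⟨1, one_ne_zero, by rw [one_pow, one_mul]; exact hone⟩
          · push_neg at hone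
            have heq : B (b i0) (b i0) = B (b jj) (b jj) := char2_eq_of_add_eq_zero hone
            refine ⟨x0, hx00, fun hzero => ?_⟩
            have h1 : x0^2 * B (b jj) (b jj) = B (b jj) (b jj) :=
              (char2_eq_of_add_eq_zero hzero).symm.trans heq
            have hx2 : x0^2 = 1 := by
              have := mul_right_cancel₀ (hd jj) (h1.trans (one_mul _).symm)
              exact this
            apply hx01
            have hzz : (x0 + 1)^2 = 0 := by
              rw [CharTwo.add_sq, hx2, one_pow]
              exact CharTwo.add_self_eq_zero 1
            have := pow_eq_zero_iff (two_ne_zero) |>.mp hzz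
            exact char2_eq_of_add_eq_zero this
        have hQ1' : (1:F)^2 * B (b i0) (b i0) + μ^2 * B (b jj) (b jj) ≠ 0 := by
          rw [one_pow, one_mul]; exact hμQ
        obtain ⟨b₁, ho₁, hch₁, hb1i, hb1o, hd1i, hd1j, htr₁, hspan₁⟩ :=
          move hb hi0jj 1 μ hQ1'
        obtain ⟨a₁, hv₁, ha₁i, ha₁jj, ha₁o⟩ : ∃ a₁ : Fin n → F,
            v = ∑ kk, a₁ kk • b₁ kk ∧
            a₁ i0 = a i0 * B (b i0) (b i0) / ((1:F)^2 * B (b i0) (b i0) + μ^2 * B (b jj) (b jj)) ∧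
            a₁ jj = a i0 * μ / ((1:F)^2 * B (b i0) (b i0) + μ^2 * B (b jj) (b jj)) ∧
            ∀ kk, kk ≠ i0 → kk ≠ jj → a₁ kk = a kk := by
          refine ⟨fun kk => if kk = i0 then
              (a i0 * 1 * B (b i0) (b i0) + a jj * μ * B (b jj) (b jj))
                / ((1:F)^2 * B (b i0) (b i0) + μ^2 * B (b jj) (b jj))
            else if kk = jj then (a i0 * μ + a jj * 1)
                / ((1:F)^2 * B (b i0) (b i0) + μ^2 * B (b jj) (b jj))
            else a kk, by rw [hv]; exact htr₁ a, ?_, ?_, ?_⟩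
          · beta_reduce
            rw [if_pos rfl, hajj]; ring_nf
          · beta_reduce
            rw [if_neg (Ne.symm hi0jj), if_pos rfl, hajj]; ring_nf
          · intro kk hh1 hh2
            beta_reduce
            rw [if_neg hh1, if_neg hh2]
        -- choose l
        obtain ⟨l, hlmem⟩ : (supp.erase i0).Nonempty := Finset.card_pos.mp (by
          rw [Finset.card_erase_of_mem hi0]; omega)
        have hli0 : l ≠ i0 := (Finset.mem_erase.mp hlmem).1
        have hlsupp : l ∈ supp := (Finset.mem_erase.mp hlmem).2
        have hljj : l ≠ jj := fun h => hjjns (h ▸ hlsupp)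
        have hal : a l ≠ 0 := (Finset.mem_filter.mp hlsupp).2
        have ha₁l : a₁ l = a l := ha₁o l hli0 hljj
        have hb1l : b₁ l = b l := hb1o l hli0 hljj
        have htl : (a l)^2 * B (b l) (b l) = (a i0)^2 * B (b i0) (b i0) :=
          hA l hlsupp i0 hi0
        -- value of t₁(i0)
        have e1 : (a₁ i0)^2 * B (b₁ i0) (b₁ i0)
            = (a i0)^2 * (B (b i0) (b i0))^2
              / ((1:F)^2 * B (b i0) (b i0) + μ^2 * B (b jj) (b jj)) := by
          rw [ha₁i, hd1i]
          field_simp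
        have hQ2ne : (a₁ i0)^2 * B (b₁ i0) (b₁ i0) + (a₁ l)^2 * B (b₁ l) (b₁ l) ≠ 0 := by
          rw [e1, ha₁l, hb1l, htl]
          intro hzero
          have hdd := char2_eq_of_add_eq_zero hzero
          rw [div_eq_iff hQ1'] at hdd
          have hzz : (a i0)^2 * B (b i0) (b i0) * (μ^2 * B (b jj) (b jj)) = 0 := by
            linear_combination (-1 : F) * hdd
          exact (mul_ne_zero ht0 (mul_ne_zero (pow_ne_zero _ hμ0) (hd jj))) hzz
        have hi0l : i0 ≠ l := Ne.symm hli0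
        obtain ⟨b₂, ho₂, hch₂, hb2i, hb2o, hd2i, hd2j, htr₂, hspan₂⟩ :=
          move ho₁ hi0l (a₁ i0) (a₁ l) hQ2ne
        obtain ⟨a₂, hv₂, ha₂i, ha₂l, ha₂o⟩ : ∃ a₂ : Fin n → F,
            v = ∑ kk, a₂ kk • b₂ kk ∧ a₂ i0 = 1 ∧ a₂ l = 0 ∧
            ∀ kk, kk ≠ i0 → kk ≠ l → a₂ kk = a₁ kk := by
          refine ⟨fun kk => if kk = i0 then
              (a₁ i0 * a₁ i0 * B (b₁ i0) (b₁ i0) + a₁ l * a₁ l * B (b₁ l) (b₁ l))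
                / ((a₁ i0)^2 * B (b₁ i0) (b₁ i0) + (a₁ l)^2 * B (b₁ l) (b₁ l))
            else if kk = l then (a₁ i0 * a₁ l + a₁ l * a₁ i0)
                / ((a₁ i0)^2 * B (b₁ i0) (b₁ i0) + (a₁ l)^2 * B (b₁ l) (b₁ l))
            else a₁ kk, by rw [hv₁]; exact htr₂ a₁, ?_, ?_, ?_⟩
          · beta_reduce
            rw [if_pos rfl, div_eq_one_iff_eq hQ2ne]; ring
          · beta_reduce
            rw [if_neg hli0, if_pos rfl, div_eq_zero_iff]
            left; linear_combination (a₁ i0 * a₁ l) * h2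
          · intro kk hh1 hh2
            beta_reduce
            rw [if_neg hh1, if_neg hh2]
        -- choose m
        obtain ⟨m, hmmem⟩ : ((supp.erase i0).erase l).Nonempty := Finset.card_pos.mp (by
          rw [Finset.card_erase_of_mem hlmem, Finset.card_erase_of_mem hi0]; omega)
        have hml : m ≠ l := (Finset.mem_erase.mp hmmem).1
        have hmi0 : m ≠ i0 := (Finset.mem_erase.mp (Finset.mem_erase.mp hmmem).2).1
        have hmsupp : m ∈ supp := (Finset.mem_erase.mp (Finset.mem_erase.mp hmmem).2).2
        have hmjj : m ≠ jj := fun h => hjjns (h ▸ hmsupp)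
        have htm : (a m)^2 * B (b m) (b m) = (a i0)^2 * B (b i0) (b i0) :=
          hA m hmsupp i0 hi0
        have ha₂m : a₂ m = a m := by
          rw [ha₂o m hmi0 hml, ha₁o m hmi0 hmjj]
        have hb2m : b₂ m = b m := by
          rw [hb2o m hmi0 hml, hb1o m hmi0 hmjj]
        have hQ3eq : (a₂ i0)^2 * B (b₂ i0) (b₂ i0) + (a₂ m)^2 * B (b₂ m) (b₂ m)
            = (a i0)^2 * (B (b i0) (b i0))^2
              / ((1:F)^2 * B (b i0) (b i0) + μ^2 * B (b jj) (b jj)) := by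
          rw [ha₂i, hd2i, e1, ha₁l, hb1l, htl, ha₂m, hb2m, htm]
          linear_combination ((a i0)^2 * B (b i0) (b i0)) * h2
        have hQ3ne : (a₂ i0)^2 * B (b₂ i0) (b₂ i0) + (a₂ m)^2 * B (b₂ m) (b₂ m) ≠ 0 := by
          rw [hQ3eq]
          exact div_ne_zero (mul_ne_zero (pow_ne_zero _ hai0) (pow_ne_zero _ (hd i0))) hQ1'
        have hi0m : i0 ≠ m := Ne.symm hmi0
        obtain ⟨b₃, ho₃, hch₃, hb3i, hb3o, hd3i, hd3j, htr₃, hspan₃⟩ :=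
          move ho₂ hi0m (a₂ i0) (a₂ m) hQ3ne
        obtain ⟨a₃, hv₃, ha₃i, ha₃m, ha₃o⟩ : ∃ a₃ : Fin n → F,
            v = ∑ kk, a₃ kk • b₃ kk ∧ a₃ i0 = 1 ∧ a₃ m = 0 ∧
            ∀ kk, kk ≠ i0 → kk ≠ m → a₃ kk = a₂ kk := by
          refine ⟨fun kk => if kk = i0 then
              (a₂ i0 * a₂ i0 * B (b₂ i0) (b₂ i0) + a₂ m * a₂ m * B (b₂ m) (b₂ m))
                / ((a₂ i0)^2 * B (b₂ i0) (b₂ i0) + (a₂ m)^2 * B (b₂ m) (b₂ m))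
            else if kk = m then (a₂ i0 * a₂ m + a₂ m * a₂ i0)
                / ((a₂ i0)^2 * B (b₂ i0) (b₂ i0) + (a₂ m)^2 * B (b₂ m) (b₂ m))
            else a₂ kk, by rw [hv₂]; exact htr₃ a₂, ?_, ?_, ?_⟩
          · beta_reduce
            rw [if_pos rfl, div_eq_one_iff_eq hQ3ne]; ring
          · beta_reduce
            rw [if_neg hmi0, if_pos rfl, div_eq_zero_iff]
            left; linear_combination (a₂ i0 * a₂ m) * h2
          · intro kk hh1 hh2
            beta_reduce
            rw [if_neg hh1, if_neg hh2]
        -- memberships in S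
        have hi0S : i0 ∈ S := hsuppS hi0
        have hlS : l ∈ S := hsuppS hlsupp
        have hmS : m ∈ S := hsuppS hmsupp
        -- support of a₃
        have hsupp₃ : (univ.filter fun kk => a₃ kk ≠ 0) ⊆ insert jj ((supp.erase l).erase m) := by
          intro y hy
          rw [Finset.mem_filter] at hy
          rcases eq_or_ne y jj with rfl | hyjj
          · exact Finset.mem_insert_self _ _
          rcases eq_or_ne y i0 with rfl | hyi0
          · exact Finset.mem_insert_of_mem (Finset.mem_erase.mpr ⟨Ne.symm hmi0,
              Finset.mem_erase.mpr ⟨Ne.symm hli0, hi0⟩⟩)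
          rcases eq_or_ne y m with rfl | hym
          · exact absurd ha₃m hy.2
          rcases eq_or_ne y l with rfl | hyl
          · rw [ha₃o y hyi0 hym] at hy
            exact absurd ha₂l hy.2
          · rw [ha₃o y hyi0 hym, ha₂o y hyi0 hyl, ha₁o y hyi0 hyjj] at hy
            exact Finset.mem_insert_of_mem (Finset.mem_erase.mpr ⟨hym,
              Finset.mem_erase.mpr ⟨hyl, Finset.mem_filter.mpr ⟨mem_univ _, hy.2⟩⟩⟩)
        have hk₃ : (univ.filter fun kk => a₃ kk ≠ 0).card ≤ k - 1 := by
          have hcc := Finset.card_le_card hsupp₃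
          have h1 := Finset.card_insert_le jj ((supp.erase l).erase m)
          rw [Finset.card_erase_of_mem (Finset.mem_erase.mpr ⟨hml, hmsupp⟩),
            Finset.card_erase_of_mem hlsupp] at h1
          omega
        have hS₃ : ∀ y ∉ S, a₃ y = 0 := by
          intro y hy
          rw [ha₃o y (fun h => hy (h ▸ hi0S)) (fun h => hy (h ▸ hmS)),
            ha₂o y (fun h => hy (h ▸ hi0S)) (fun h => hy (h ▸ hlS)),
            ha₁o y (fun h => hy (h ▸ hi0S)) (fun h => hy (h ▸ hjjS))]
          exact hS y hy
        have hbad₃ : 2 ≤ S.card → ∃ x ∈ Submodule.span F (⇑b₃ '' ↑S),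
            (B v x)^2 ≠ B v v * B x x := by
          intro hh
          obtain ⟨x, hx, hne'⟩ := hbad hh
          refine ⟨x, ?_, hne'⟩
          rw [hspan₃ ↑S (Finset.mem_coe.mpr hi0S) (Finset.mem_coe.mpr hmS),
            hspan₂ ↑S (Finset.mem_coe.mpr hi0S) (Finset.mem_coe.mpr hlS),
            hspan₁ ↑S (Finset.mem_coe.mpr hi0S) (Finset.mem_coe.mpr hjjS)]
          exact hx
        obtain ⟨b₄, ho₄, hch₄, hvmem, hout₄⟩ :=
          IH (k-1) (by omega) b₃ ho₃ S a₃ hv₃ hS₃ hk₃ hbad₃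
        refine ⟨b₄, ho₄, chain_trans hch₁ (chain_trans hch₂ (chain_trans hch₃ hch₄)),
          hvmem, fun y hy => ?_⟩
        rw [hout₄ y hy,
          hb3o y (fun h => hy (h ▸ hi0S)) (fun h => hy (h ▸ hmS)),
          hb2o y (fun h => hy (h ▸ hi0S)) (fun h => hy (h ▸ hlS)),
          hb1o y (fun h => hy (h ▸ hi0S)) (fun h => hy (h ▸ hjjS))]
      · -- B2 : S = supp, contradiction with hbad
        exfalso
        push_neg at hex
        have hSsupp : S = supp := le_antisymm hex hsuppS
        obtain ⟨x, hx, hne'⟩ := hbad (by rw [hSsupp]; omega)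
        obtain ⟨xa, hxa0, hxeq⟩ := span_coords hx
        apply hne'
        have hxa0' : ∀ i, i ∉ supp → xa i = 0 := fun i hi => hxa0 i (by rw [hSsupp]; exact hi)
        have hzero_out : ∀ x_1 ∈ univ, x_1 ∉ supp → a x_1 * xa x_1 * B (b x_1) (b x_1) = 0 := by
          intro y _ hy
          have : a y = 0 := by
            by_contra hh; exact hy (Finset.mem_filter.mpr ⟨mem_univ _, hh⟩)
          rw [this]; ring
        have hBvx : B v x = ∑ i ∈ supp, a i * xa i * B (b i) (b i) := by
          rw [hv, hxeq, ortho_expand hb]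
          exact (Finset.sum_subset (Finset.subset_univ supp) hzero_out).symm
        have hBxx : B x x = ∑ i ∈ supp, xa i * xa i * B (b i) (b i) := by
          rw [hxeq, ortho_expand hb]
          refine (Finset.sum_subset (Finset.subset_univ supp) ?_).symm
          intro y _ hy
          rw [hxa0' y hy]; ring
        rw [hBvx, hBxx, hqvt, CharTwo.sum_sq, Finset.mul_sum]
        refine Finset.sum_congr rfl fun i hi => ?_
        rw [← hA i hi i0 hi0]
        ring

open scoped Classical in
lemma aux_chain (hnd : ∀ x : V, (∀ y, B x y = 0) → x = 0)
    (Hμ : (∃ x : F, x ≠ 0 ∧ x ≠ 1) ∨ n ≤ 3) :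
    ∀ (m : ℕ) (b c : Module.Basis (Fin n) F V), IsOrthoBasis B b → IsOrthoBasis B c →
      (univ.filter fun i => b i ∉ Set.range c).card ≤ m → ChainEquiv B b c := by
  intro m
  induction m using Nat.strong_induction_on with
  | _ m IH =>
  intro b c hb hc hm
  set Sb := univ.filter fun i => b i ∉ Set.range c with hSbdef
  have hnb : (Set.range ⇑b).ncard = n := by
    rw [← Set.image_univ, Set.ncard_image_of_injective _ b.injective, Set.ncard_univ]
    simp
  have hnc : (Set.range ⇑c).ncard = n := by
    rw [← Set.image_univ, Set.ncard_image_of_injective _ c.injective, Set.ncard_univ]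
    simp
  by_cases hS0 : Sb = ∅
  · -- ranges coincide
    have hsub : Set.range ⇑b ⊆ Set.range ⇑c := by
      rintro - ⟨i, rfl⟩
      by_contra hh
      have : i ∈ Sb := Finset.mem_filter.mpr ⟨mem_univ _, hh⟩
      rw [hS0] at this
      exact absurd this (Finset.notMem_empty i)
    refine chain_single hb hc ?_
    rw [Set.inter_eq_self_of_subset_left hsub, hnb]
    omega
  · have hne : Sb.Nonempty := Finset.nonempty_of_ne_empty hS0
    have hd := diag_ne hnd hb
    have hdc := diag_ne hnd hc
    -- there is a vector of c outside range b
    have hT : ∃ j, c j ∉ Set.range ⇑b := by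
      by_contra hno
      push_neg at hno
      obtain ⟨i1, hi1⟩ := hne
      have hsub : Set.range ⇑c ⊆ Set.range ⇑b := by rintro - ⟨j, rfl⟩; exact hno j
      have heq : Set.range ⇑c = Set.range ⇑b :=
        Set.eq_of_subset_of_ncard_le hsub (by rw [hnb, hnc]) (Set.finite_range _)
      exact (Finset.mem_filter.mp hi1).2 (heq ▸ (⟨i1, rfl⟩ : b i1 ∈ Set.range ⇑b))
    -- coordinates of such vectors vanish outside Sb
    have hcoord : ∀ j, c j ∉ Set.range ⇑b → ∀ i, i ∉ Sb → b.repr (c j) i = 0 := by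
      intro j hj i hiSb
      have hbi : b i ∈ Set.range ⇑c := by
        by_contra hh
        exact hiSb (Finset.mem_filter.mpr ⟨mem_univ _, hh⟩)
      obtain ⟨mm, hmm⟩ := hbi
      have hmmj : mm ≠ j := by
        rintro rfl
        exact hj (hmm ▸ ⟨i, rfl⟩)
      have hBcb : B (c j) (b i) = 0 := by rw [← hmm]; exact hc j mm (Ne.symm hmmj)
      have hexp : B (c j) (b i) = b.repr (c j) i * B (b i) (b i) := by
        conv_lhs => rw [← b.sum_repr (c j)]
        exact expand_coord hb _ i
      rw [hexp] at hBcb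
      exact (mul_eq_zero.mp hBcb).resolve_right (hd i)
    -- select a good vector to insert
    have hsel : ∃ j, c j ∉ Set.range ⇑b ∧ (2 ≤ Sb.card →
        ∃ x ∈ Submodule.span F (⇑b '' ↑Sb),
          (B (c j) x)^2 ≠ B (c j) (c j) * B x x) := by
      by_cases h2S : 2 ≤ Sb.card
      · by_contra hnone
        push_neg at hnone
        have hbadall : ∀ j, c j ∉ Set.range ⇑b →
            ∀ x ∈ Submodule.span F (⇑b '' ↑Sb), (B (c j) x)^2 = B (c j) (c j) * B x x :=
          fun j hj => (hnone j hj).2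
        obtain ⟨i1, hi1, i2, hi2, h12⟩ := Finset.one_lt_card.mp h2S
        -- coefficients of b i1 in basis c vanish where c j ∈ range b
        set γ : Fin n → F := fun j => c.repr (b i1) j with hγ
        have hγ0 : ∀ j, c j ∈ Set.range ⇑b → γ j = 0 := by
          intro j hj
          obtain ⟨mm, hmm⟩ := hj
          have hmmi1 : mm ≠ i1 := by
            rintro rfl
            exact (Finset.mem_filter.mp hi1).2 ⟨j, hmm.symm⟩
          have hBcb : B (b i1) (c j) = 0 := by rw [← hmm]; exact hb i1 mm (Ne.symm hmmi1)
          have hexp : B (b i1) (c j) = c.repr (b i1) j * B (c j) (c j) := by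
            conv_lhs => rw [← c.sum_repr (b i1)]
            exact expand_coord hc _ j
          rw [hexp] at hBcb
          exact (mul_eq_zero.mp hBcb).resolve_right (hdc j)
        have hbi1 : b i1 = ∑ j, γ j • c j := (c.sum_repr (b i1)).symm
        -- b i1 inherits the "bad" property
        have hBad : ∀ x ∈ Submodule.span F (⇑b '' ↑Sb),
            (B (b i1) x)^2 = B (b i1) (b i1) * B x x := by
          intro x hx
          rw [hbi1, expand_left, ortho_expand hc, CharTwo.sum_sq, Finset.sum_mul]
          refine Finset.sum_congr rfl fun j _ => ?_
          rcases eq_or_ne (γ j) 0 with hz | hz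
          · rw [hz]; ring
          · have hcj : c j ∉ Set.range ⇑b := fun hmem => hz (hγ0 j hmem)
            rw [mul_pow, hbadall j hcj x hx]
            ring
        have := hBad (b i2) (Submodule.subset_span ⟨i2, Finset.mem_coe.mpr hi2, rfl⟩)
        rw [hb i1 i2 h12] at this
        exact (mul_ne_zero (hd i1) (hd i2)) (by rw [← this]; ring)
      · obtain ⟨j, hj⟩ := hT
        exact ⟨j, hj, fun h => absurd h h2S⟩
    obtain ⟨js, hjs, hbads⟩ := hsel
    obtain ⟨b', ho', hch', hmem', hout'⟩ :=
      insert_lemma hnd Hμ (c js) (hdc js) n b hb Sb (fun i => b.repr (c js) i)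
        (b.sum_repr (c js)).symm (hcoord js hjs)
        (le_trans (Finset.card_filter_le _ _) (by simp)) hbads
    obtain ⟨istar, histar⟩ := hmem'
    have histarSb : istar ∈ Sb := by
      by_contra hh
      rw [hout' istar hh] at histar
      exact hjs ⟨istar, histar⟩
    have hsub' : (univ.filter fun i => b' i ∉ Set.range ⇑c) ⊆ Sb.erase istar := by
      intro y hy
      rw [Finset.mem_filter] at hy
      have hySb : y ∈ Sb := by
        by_contra hh
        rw [hout' y hh] at hy
        exact hh (Finset.mem_filter.mpr ⟨mem_univ _, hy.2⟩)
      refine Finset.mem_erase.mpr ⟨?_, hySb⟩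
      rintro rfl
      exact hy.2 ⟨js, histar.symm⟩
    have hm1 : (univ.filter fun i => b' i ∉ Set.range ⇑c).card ≤ m - 1 := by
      have h1 := Finset.card_le_card hsub'
      rw [Finset.card_erase_of_mem histarSb] at h1
      have h2 := Finset.card_pos.mpr hne
      omega
    have hm0 : 1 ≤ m := le_trans (Finset.card_pos.mpr hne) hm
    exact chain_trans hch' (IH (m-1) (by omega) b' c ho' hc hm1)

end ChainLemmaProof

/-- Let `F` be a field of characteristic `2` and `(V, B)` an inner product space over `F`;
if `F` is finite assume `dim_F V = 3`.  Then any two orthogonal bases of `V` are chain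
equivalent over `F`. -/
theorem chainLemma_char_two_field {F : Type*} [Field F] [CharP F 2]
    {V : Type*} [AddCommGroup V] [Module F V] (B : LinearMap.BilinForm F V)
    (hB : IsInnerProductSpace F V B) (hfin : Finite F → Module.finrank F V = 3)
    {n : ℕ} (b c : Module.Basis (Fin n) F V) (hb : IsOrthoBasis B b) (hc : IsOrthoBasis B c) :
    ChainEquiv B b c := by
  classical
  have hnd : ∀ x : V, (∀ y, B x y = 0) → x = 0 := by
    intro x hx
    apply hB.nondegenerate.injective
    apply LinearMap.ext
    intro y
    simp [hx y]
  have Hμ : (∃ x : F, x ≠ 0 ∧ x ≠ 1) ∨ n ≤ 3 := by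
    rcases finite_or_infinite F with hF | hF
    · right
      have h3 := hfin hF
      have hr : Module.finrank F V = n := by
        rw [Module.finrank_eq_card_basis b, Fintype.card_fin]
      omega
    · left
      obtain ⟨x, hx⟩ := Infinite.exists_notMem_finset ({0, 1} : Finset F)
      simp only [Finset.mem_insert, Finset.mem_singleton, not_or] at hx
      exact ⟨x, hx.1, hx.2⟩
  exact aux_chain hnd Hμ n b c hb hc (le_trans (Finset.card_le_univ _) (by simp))
end

section
/- Let F ≠ F₂ be a finite field of characteristic 2 and let n ≥ 4 be an even integer. Assume that any two orthogonal bases of any inner product space over F of dimension smaller than n are chain equivalent. Then in the inner product space ⟨1,1,…,1⟩ = ⟨1⟩^{⊕n} (i.e. Fⁿ with the standard dot product), the standard orthonormal basis e = (e₁,…,eₙ) and the orthogonal basis ê = (ê₁,…,êₙ), where ê_r = Σ_{1 ≤ i ≤ n, i ≠ r} eᵢ, are chain equivalent over F. -/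
set_option maxHeartbeats 1000000


open Function TensorProduct

/-- The standard dot product bilinear form on `Fin n → F`. -/
def dotForm (F : Type*) [CommRing F] (n : ℕ) : LinearMap.BilinForm F (Fin n → F) :=
  LinearMap.mk₂ F (fun x y => ∑ i, x i * y i)
    (fun x x' y => by simp [add_mul, Finset.sum_add_distrib])
    (fun a x y => by simp [Finset.mul_sum, mul_assoc])
    (fun x y y' => by simp [mul_add, Finset.sum_add_distrib])
    (fun a x y => by simp [Finset.mul_sum, mul_left_comm])

section Helpers

variable {F : Type*} [Field F]

lemma dotForm_apply {n : ℕ} (x y : Fin n → F) : dotForm F n x y = ∑ i, x i * y i := rfl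

lemma dotForm_comm {n : ℕ} (x y : Fin n → F) : dotForm F n x y = dotForm F n y x := by
  simp [dotForm_apply, mul_comm]

lemma dotForm_single_right {n : ℕ} (x : Fin n → F) (j : Fin n) :
    dotForm F n x (Pi.single j 1) = x j := by
  classical
  rw [dotForm_apply]
  rw [Finset.sum_eq_single j]
  · simp
  · intro i _ hij; rw [Pi.single_eq_of_ne hij, mul_zero]
  · simp

lemma dotForm_injective {n : ℕ} : Function.Injective (dotForm F n) := by
  intro x y h
  funext j
  have := congrArg (fun f : (Fin n → F) →ₗ[F] F => f (Pi.single j 1)) h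
  simpa [dotForm_single_right] using this

/-- orthogonal basis vectors of an (injective) bilinear form are anisotropic -/
lemma ortho_aniso {n : ℕ} {N : ℕ} (B : LinearMap.BilinForm F (Fin N → F))
    (hinj : Function.Injective B) (b : Module.Basis (Fin n) F (Fin N → F))
    (hb : IsOrthoBasis B b) (i : Fin n) : B (b i) (b i) ≠ 0 := by
  intro h0
  have hz : B (b i) = 0 := by
    apply b.ext
    intro j
    rcases eq_or_ne i j with rfl | hij
    · simpa using h0
    · simpa using hb i j hij
  have : b i = 0 := hinj (by rw [hz, map_zero])
  exact b.ne_zero i this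

lemma orthoFamily_linearIndependent {N n : ℕ} (B : LinearMap.BilinForm F (Fin N → F))
    (v : Fin n → (Fin N → F)) (horth : ∀ i j, i ≠ j → B (v i) (v j) = 0)
    (hani : ∀ i, B (v i) (v i) ≠ 0) : LinearIndependent F v := by
  rw [Fintype.linearIndependent_iff]
  intro g hg i
  have h := congrArg (fun x => B x (v i)) hg
  simp only [map_sum, LinearMap.coe_sum, Finset.sum_apply, map_smul, LinearMap.smul_apply,
    smul_eq_mul, map_zero, LinearMap.zero_apply] at h
  rw [Finset.sum_eq_single i (fun j _ hji => by rw [horth j i hji, mul_zero])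
    (by intro hi; exact absurd (Finset.mem_univ i) hi)] at h
  exact (mul_eq_zero.1 h).resolve_right (hani i)

noncomputable def orthoBasis {n : ℕ} (hn : n ≠ 0) (B : LinearMap.BilinForm F (Fin n → F))
    (v : Fin n → (Fin n → F)) (horth : ∀ i j, i ≠ j → B (v i) (v j) = 0)
    (hani : ∀ i, B (v i) (v i) ≠ 0) : Module.Basis (Fin n) F (Fin n → F) :=
  haveI : Nonempty (Fin n) := ⟨⟨0, Nat.pos_of_ne_zero hn⟩⟩
  basisOfLinearIndependentOfCardEqFinrank (orthoFamily_linearIndependent B v horth hani)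
    (by simp [Module.finrank_pi])

lemma orthoBasis_coe {n : ℕ} (hn : n ≠ 0) (B : LinearMap.BilinForm F (Fin n → F))
    (v : Fin n → (Fin n → F)) (horth : ∀ i j, i ≠ j → B (v i) (v j) = 0)
    (hani : ∀ i, B (v i) (v i) ≠ 0) : ⇑(orthoBasis hn B v horth hani) = v := by
  haveI : Nonempty (Fin n) := ⟨⟨0, Nat.pos_of_ne_zero hn⟩⟩
  exact coe_basisOfLinearIndependentOfCardEqFinrank _ _

lemma le_ncard_inter {α : Type*} {N : ℕ} {f g : Fin N → α} (hf : Function.Injective f)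
    (I : Finset (Fin N)) (h : ∀ i ∈ I, f i ∈ Set.range g) :
    I.card ≤ (Set.range f ∩ Set.range g).ncard := by
  have hsub : (f '' I) ⊆ Set.range f ∩ Set.range g := by
    rintro x ⟨i, hi, rfl⟩; exact ⟨Set.mem_range_self i, h i hi⟩
  have h1 : (f '' (I : Set (Fin N))).ncard = I.card := by
    rw [Set.ncard_image_of_injective _ hf, Set.ncard_coe_finset]
  rw [← h1]
  exact Set.ncard_le_ncard hsub ((Set.finite_range f).inter_of_left _)

lemma filter_card_ge {α : Type*} {N : ℕ} (f g : Fin N → α) (hf : Function.Injective f) (k : ℕ)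
    (h : k ≤ (Set.range f ∩ Set.range g).ncard) :
    ∃ J : Finset (Fin N), k ≤ J.card ∧ ∀ j ∈ J, f j ∈ Set.range g := by
  classical
  refine ⟨Finset.univ.filter (fun j => f j ∈ Set.range g), ?_, ?_⟩
  · have hsub : (Set.range f ∩ Set.range g) ⊆
        f '' (Finset.univ.filter (fun j => f j ∈ Set.range g) : Finset (Fin N)) := by
      rintro x ⟨⟨j, rfl⟩, hx⟩
      refine ⟨j, ?_, rfl⟩
      simp only [Finset.mem_coe, Finset.mem_filter, Finset.mem_univ, true_and]
      exact hx
    calc k ≤ (Set.range f ∩ Set.range g).ncard := h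
      _ ≤ (f '' (Finset.univ.filter (fun j => f j ∈ Set.range g) : Finset (Fin N))).ncard :=
          Set.ncard_le_ncard hsub ((Set.toFinite _).image f)
      _ = _ := by rw [Set.ncard_image_of_injective _ hf, Set.ncard_coe_finset]
  · intro j hj
    exact (Finset.mem_filter.1 hj).2

lemma chainEquiv_trans {R : Type*} [CommRing R] {V : Type*} [AddCommGroup V] [Module R V]
    {n : ℕ} {B : LinearMap.BilinForm R V} {a b c : Module.Basis (Fin n) R V}
    (h1 : ChainEquiv B a b) (h2 : ChainEquiv B b c) : ChainEquiv B a c := by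
  classical
  obtain ⟨r1, s1, ho1, hs10, hs1l, hc1⟩ := h1
  obtain ⟨r2, s2, ho2, hs20, hs2l, hc2⟩ := h2
  have key1 : ∀ (x : ℕ) (hx : x < r1) (p : x < r1 + 1) (q : x + 1 < r1 + 1),
      n - 2 ≤ (Set.range (s1 ⟨x, p⟩) ∩ Set.range (s1 ⟨x + 1, q⟩)).ncard := by
    intro x hx p q
    exact hc1 ⟨x, hx⟩
  have key2 : ∀ (x : ℕ) (hx : x < r2) (p : x < r2 + 1) (q : x + 1 < r2 + 1),
      n - 2 ≤ (Set.range (s2 ⟨x, p⟩) ∩ Set.range (s2 ⟨x + 1, q⟩)).ncard := by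
    intro x hx p q
    exact hc2 ⟨x, hx⟩
  refine ⟨r1 + r2, fun k => if h : k.val ≤ r1 then s1 ⟨k.val, by omega⟩
    else s2 ⟨k.val - r1, by omega⟩, ?_, ?_, ?_, ?_⟩
  · intro k
    dsimp only
    split_ifs
    · exact ho1 _
    · exact ho2 _
  · have h0 : ((0 : Fin (r1 + r2 + 1)) : ℕ) = 0 := rfl
    simp only [h0, dif_pos (Nat.zero_le r1)]
    have e : (⟨0, by omega⟩ : Fin (r1 + 1)) = 0 := Fin.ext (by simp)
    exact (congrArg s1 e).trans hs10
  · by_cases h : r1 + r2 ≤ r1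
    · have hr2 : r2 = 0 := by omega
      subst hr2
      have hl : ((Fin.last (r1 + 0)) : ℕ) = r1 + 0 := rfl
      simp only [hl, dif_pos h]
      have e0 : (0 : Fin (0 + 1)) = Fin.last 0 := Fin.ext (by simp)
      have hbc : b = c := (hs20.symm).trans ((congrArg s2 e0).trans hs2l)
      have e : (⟨r1 + 0, by omega⟩ : Fin (r1 + 0 + 1)) = Fin.last (r1 + 0) :=
        Fin.ext (by simp only [Fin.val_last])
      exact (congrArg s1 e).trans (hs1l.trans hbc)
    · have hl : ((Fin.last (r1 + r2)) : ℕ) = r1 + r2 := rfl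
      simp only [hl, dif_neg h]
      have e : (⟨r1 + r2 - r1, by omega⟩ : Fin (r2 + 1)) = Fin.last r2 :=
        Fin.ext (by simp only [Fin.val_last]; omega)
      exact (congrArg s2 e).trans hs2l
  · intro i
    have hcs : (i.castSucc : ℕ) = i.val := rfl
    have hsu : (i.succ : ℕ) = i.val + 1 := rfl
    by_cases h1' : i.val + 1 ≤ r1
    · simp only [hcs, hsu, dif_pos (by omega : i.val ≤ r1), dif_pos h1']
      exact key1 i.val (by omega) _ _
    · by_cases h2' : i.val ≤ r1
      · have hiv : i.val = r1 := by omega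
        have hr2 : 0 < r2 := by omega
        simp only [hcs, hsu, dif_pos h2', dif_neg (by omega : ¬ i.val + 1 ≤ r1)]
        simp only [hiv, show r1 + 1 - r1 = 1 from by omega]
        have e1 : s1 ⟨r1, by omega⟩ = b :=
          (congrArg s1 (Fin.ext (by simp only [Fin.val_last]) :
            (⟨r1, by omega⟩ : Fin (r1 + 1)) = Fin.last r1)).trans hs1l
        rw [e1, ← hs20]
        have e2 : (0 : Fin (r2 + 1)) = ⟨0, by omega⟩ := Fin.ext (by simp)
        rw [e2]
        exact key2 0 hr2 _ _
      · simp only [hcs, hsu, dif_neg h2', dif_neg (by omega : ¬ i.val + 1 ≤ r1)]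
        simp only [show i.val + 1 - r1 = (i.val - r1) + 1 from by omega]
        exact key2 (i.val - r1) (by omega) _ _

end Helpers

section Lift

variable {F : Type*} [Field F]

lemma lift_chain {m : ℕ} (hm : m ≠ 0)
    (ih : ∀ B' : LinearMap.BilinForm F (Fin m → F), IsInnerProductSpace F (Fin m → F) B' →
      ∀ b c : Module.Basis (Fin m) F (Fin m → F), IsOrthoBasis B' b → IsOrthoBasis B' c →
        ChainEquiv B' b c)
    (b c : Module.Basis (Fin (m + 1)) F (Fin (m + 1) → F))
    (hb : IsOrthoBasis (dotForm F (m + 1)) b) (hc : IsOrthoBasis (dotForm F (m + 1)) c)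
    (i₀ i₁ : Fin (m + 1)) (hv : b i₀ = c i₁) :
    ChainEquiv (dotForm F (m + 1)) b c := by
  classical
  haveI : Nonempty (Fin m) := ⟨⟨0, Nat.pos_of_ne_zero hm⟩⟩
  set B := dotForm F (m + 1) with hBdef
  have hBsym : ∀ x y : Fin (m + 1) → F, B x y = B y x := fun x y => dotForm_comm x y
  have hBinj : Function.Injective ⇑B := dotForm_injective
  have hd : ∀ i, B (b i) (b i) ≠ 0 := ortho_aniso B hBinj b hb
  have hdc : ∀ i, B (c i) (c i) ≠ 0 := ortho_aniso B hBinj c hc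
  -- the embedding of F^m onto the span of the b-vectors other than b i₀
  set φ : (Fin m → F) →ₗ[F] (Fin (m + 1) → F) :=
    { toFun := fun x => ∑ j, x j • b (i₀.succAbove j),
      map_add' := fun x y => by simp [add_smul, Finset.sum_add_distrib],
      map_smul' := fun a x => by simp [Finset.smul_sum, mul_smul] } with hφdef
  have hφapp : ∀ x : Fin m → F, φ x = ∑ j, x j • b (i₀.succAbove j) := fun x => rfl
  have hφb : ∀ (x : Fin m → F) (i : Fin (m + 1)),
      B (φ x) (b i) = ∑ j, x j * B (b (i₀.succAbove j)) (b i) := by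
    intro x i
    rw [hφapp, map_sum]
    simp [LinearMap.coe_sum, Finset.sum_apply, map_smul, LinearMap.smul_apply, smul_eq_mul]
  have hφsA : ∀ (x : Fin m → F) (k : Fin m),
      B (φ x) (b (i₀.succAbove k)) = x k * B (b (i₀.succAbove k)) (b (i₀.succAbove k)) := by
    intro x k
    rw [hφb]
    apply Finset.sum_eq_single k
    · intro j _ hjk
      rw [hb _ _ (fun h => hjk (Fin.succAbove_right_injective h)), mul_zero]
    · intro hk; exact absurd (Finset.mem_univ k) hk
  have hφv : ∀ x : Fin m → F, B (φ x) (b i₀) = 0 := by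
    intro x
    rw [hφb]
    apply Finset.sum_eq_zero
    intro j _
    rw [hb _ _ (Fin.succAbove_ne i₀ j), mul_zero]
  have hφsingle : ∀ j : Fin m, φ (Pi.single j 1) = b (i₀.succAbove j) := by
    intro j
    rw [hφapp, Finset.sum_eq_single j]
    · simp
    · intro k _ hkj; rw [Pi.single_eq_of_ne hkj, zero_smul]
    · intro hj; exact absurd (Finset.mem_univ j) hj
  set B' := B.compl₁₂ φ φ with hB'def
  have hB'app : ∀ x y : Fin m → F, B' x y = B (φ x) (φ y) := fun x y => rfl
  have hB'e : ∀ (x : Fin m → F) (k : Fin m),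
      B' x (Pi.single k 1) = x k * B (b (i₀.succAbove k)) (b (i₀.succAbove k)) := by
    intro x k
    rw [hB'app, hφsingle]
    exact hφsA x k
  -- B' is an inner product space structure on F^m
  have hips : IsInnerProductSpace F (Fin m → F) B' := by
    refine ⟨inferInstance, inferInstance, fun x y => by rw [hB'app, hB'app, hBsym], ?_⟩
    refine Function.bijective_iff_has_inverse.2
      ⟨fun f k => f (Pi.single k 1) / B (b (i₀.succAbove k)) (b (i₀.succAbove k)), ?_, ?_⟩
    · intro x
      funext k
      simp only
      rw [hB'e]
      exact mul_div_cancel_right₀ (x k) (hd (i₀.succAbove k))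
    · intro f
      apply (Pi.basisFun F (Fin m)).ext
      intro k
      rw [Pi.basisFun_apply, hB'e]
      simp only
      exact div_mul_cancel₀ (f (Pi.single k 1)) (hd (i₀.succAbove k))
  have hB'inj : Function.Injective ⇑B' := hips.nondegenerate.injective
  -- the standard basis is B'-orthogonal
  have he'ortho : IsOrthoBasis B' (Pi.basisFun F (Fin m)) := by
    intro i j hij
    rw [Pi.basisFun_apply, Pi.basisFun_apply, hB'e]
    rw [Pi.single_eq_of_ne (Ne.symm hij), zero_mul]
  -- the c-side family pulled back through φ
  set γ : Fin m → (Fin m → F) :=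
    fun j k => b.repr (c (i₁.succAbove j)) (i₀.succAbove k) with hγdef
  have hrepr0 : ∀ j : Fin m, b.repr (c (i₁.succAbove j)) i₀ = 0 := by
    intro j
    have h1 : B (c (i₁.succAbove j)) (b i₀) = 0 := by
      rw [hv]; exact hc _ _ (Fin.succAbove_ne i₁ j)
    have h2 : B (c (i₁.succAbove j)) (b i₀)
        = ∑ i, b.repr (c (i₁.succAbove j)) i * B (b i) (b i₀) := by
      conv_lhs => rw [← b.sum_repr (c (i₁.succAbove j))]
      rw [map_sum]
      simp [LinearMap.coe_sum, Finset.sum_apply, map_smul, LinearMap.smul_apply, smul_eq_mul]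
    rw [h2, Finset.sum_eq_single i₀ (fun j' _ hj' => by rw [hb _ _ hj', mul_zero])
      (fun hi => absurd (Finset.mem_univ i₀) hi)] at h1
    exact (mul_eq_zero.1 h1).resolve_right (hd i₀)
  have hφγ : ∀ j : Fin m, φ (γ j) = c (i₁.succAbove j) := by
    intro j
    have hsum := Fin.sum_univ_succAbove
      (fun i => b.repr (c (i₁.succAbove j)) i • b i) i₀
    have h1 : φ (γ j) = ∑ k, b.repr (c (i₁.succAbove j)) (i₀.succAbove k) • b (i₀.succAbove k) :=
      rfl
    have key : c (i₁.succAbove j)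
        = ∑ k : Fin m, b.repr (c (i₁.succAbove j)) (i₀.succAbove k) • b (i₀.succAbove k) := by
      conv_lhs => rw [← b.sum_repr (c (i₁.succAbove j))]
      rw [hsum, hrepr0 j, zero_smul, zero_add]
    exact h1.trans key.symm
  have hγo : ∀ j k, j ≠ k → B' (γ j) (γ k) = 0 := by
    intro j k hjk
    rw [hB'app, hφγ, hφγ]
    exact hc _ _ (fun h => hjk (Fin.succAbove_right_injective h))
  have hγa : ∀ j, B' (γ j) (γ j) ≠ 0 := by
    intro j
    rw [hB'app, hφγ]
    exact hdc _
  set c'' : Module.Basis (Fin m) F (Fin m → F) := orthoBasis hm B' γ hγo hγa with hc''def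
  have hc''coe : ⇑c'' = γ := orthoBasis_coe hm B' γ hγo hγa
  have hc''ortho : IsOrthoBasis B' c'' := by
    intro i j hij
    rw [show c'' i = γ i from congrFun hc''coe i, show c'' j = γ j from congrFun hc''coe j]
    exact hγo i j hij
  have he'coe : ∀ j : Fin m, (Pi.basisFun F (Fin m)) j = Pi.single j 1 := fun j =>
    Pi.basisFun_apply F (Fin m) j
  obtain ⟨r, s, hso, hs0, hsl, hscard⟩ :=
    ih B' hips (Pi.basisFun F (Fin m)) c'' he'ortho hc''ortho
  -- lift each intermediate basis
  set L : Fin (r + 1) → (Fin (m + 1) → (Fin (m + 1) → F)) :=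
    fun k => i₀.insertNth (b i₀) (fun j => φ (s k j)) with hLdef
  have hLi₀ : ∀ k, L k i₀ = b i₀ := fun k => Fin.insertNth_apply_same i₀ _ _
  have hLsA : ∀ k j, L k (i₀.succAbove j) = φ (s k j) := fun k j =>
    Fin.insertNth_apply_succAbove i₀ _ _ j
  have hLorth : ∀ k, ∀ i j, i ≠ j → B (L k i) (L k j) = 0 := by
    intro k i j hij
    rcases eq_or_ne i i₀ with rfl | hi
    · obtain ⟨j', rfl⟩ := Fin.exists_succAbove_eq (Ne.symm hij)
      rw [hLi₀, hLsA, hBsym]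
      exact hφv _
    · obtain ⟨i', rfl⟩ := Fin.exists_succAbove_eq hi
      rcases eq_or_ne j i₀ with rfl | hj
      · rw [hLi₀, hLsA]
        exact hφv _
      · obtain ⟨j', rfl⟩ := Fin.exists_succAbove_eq hj
        rw [hLsA, hLsA, ← hB'app]
        exact hso k i' j' (fun h => hij (by rw [h]))
  have hLaniso : ∀ k i, B (L k i) (L k i) ≠ 0 := by
    intro k i
    rcases eq_or_ne i i₀ with rfl | hi
    · rw [hLi₀]; exact hd _
    · obtain ⟨i', rfl⟩ := Fin.exists_succAbove_eq hi
      rw [hLsA, ← hB'app]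
      exact ortho_aniso B' hB'inj (s k) (hso k) i'
  set W : Fin (r + 1) → Module.Basis (Fin (m + 1)) F (Fin (m + 1) → F) :=
    fun k => orthoBasis (Nat.succ_ne_zero m) B (L k) (hLorth k) (hLaniso k) with hWdef
  have hWcoe : ∀ k, ⇑(W k) = L k := fun k => orthoBasis_coe _ _ _ _ _
  -- the first lifted basis agrees with b, the last with c (as sets)
  have hL0 : ∀ i, L 0 i = b i := by
    intro i
    rcases eq_or_ne i i₀ with rfl | hi
    · exact hLi₀ 0
    · obtain ⟨i', rfl⟩ := Fin.exists_succAbove_eq hi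
      rw [hLsA, hs0, he'coe, hφsingle]
  have hLlast : ∀ i, ∃ i', L (Fin.last r) i = c i' := by
    intro i
    rcases eq_or_ne i i₀ with rfl | hi
    · exact ⟨i₁, by rw [hLi₀, hv]⟩
    · obtain ⟨i', rfl⟩ := Fin.exists_succAbove_eq hi
      refine ⟨i₁.succAbove i', ?_⟩
      rw [hLsA, hsl, show c'' i' = γ i' from congrFun hc''coe i', hφγ]
  -- assemble the chain
  set S : Fin (r + 2 + 1) → Module.Basis (Fin (m + 1)) F (Fin (m + 1) → F) :=
    fun k => if h0 : k.val = 0 then b else if hl : k.val = r + 2 then c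
      else W ⟨k.val - 1, by omega⟩ with hSdef
  have hS0 : ∀ k : Fin (r + 2 + 1), k.val = 0 → S k = b := by
    intro k hk
    simp only [hSdef]
    rw [dif_pos hk]
  have hSl : ∀ k : Fin (r + 2 + 1), k.val = r + 2 → S k = c := by
    intro k hk
    simp only [hSdef]
    rw [dif_neg (by omega), dif_pos hk]
  have hSW : ∀ (k : Fin (r + 2 + 1)) (x : ℕ) (hx : x < r + 1), k.val = x + 1 →
      S k = W ⟨x, hx⟩ := by
    intro k x hx hk
    simp only [hSdef]
    rw [dif_neg (by omega), dif_neg (by omega)]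
    congr 1
    exact Fin.ext (show k.val - 1 = x by omega)
  -- the three kinds of neighbour estimates
  have endL : ∀ p : (0 : ℕ) < r + 1,
      m + 1 - 2 ≤ (Set.range b ∩ Set.range (W ⟨0, p⟩)).ncard := by
    intro p
    have hkk0 : (⟨0, p⟩ : Fin (r + 1)) = 0 := Fin.ext (by simp)
    have hmem : ∀ idx ∈ (Finset.univ : Finset (Fin (m + 1))),
        b idx ∈ Set.range (W ⟨0, p⟩) := by
      intro idx _
      refine ⟨idx, ?_⟩
      rw [hkk0, congrFun (hWcoe 0) idx]
      exact hL0 idx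
    have hcard := le_ncard_inter b.injective Finset.univ hmem
    simp only [Finset.card_univ, Fintype.card_fin] at hcard
    omega
  have middle : ∀ (x : ℕ) (hx : x < r) (p : x < r + 1) (q : x + 1 < r + 1),
      m + 1 - 2 ≤ (Set.range (W ⟨x, p⟩) ∩ Set.range (W ⟨x + 1, q⟩)).ncard := by
    intro x hx p q
    have hsc : m - 2 ≤ (Set.range (s ⟨x, p⟩) ∩ Set.range (s ⟨x + 1, q⟩)).ncard :=
      hscard ⟨x, hx⟩
    obtain ⟨J, hJ, hJmem⟩ := filter_card_ge (s ⟨x, p⟩) (s ⟨x + 1, q⟩)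
      (s ⟨x, p⟩).injective _ hsc
    set I : Finset (Fin (m + 1)) := insert i₀ (J.image (i₀.succAbove)) with hIdef
    have hInotmem : i₀ ∉ J.image (i₀.succAbove) := by
      simp only [Finset.mem_image]
      rintro ⟨j, hj, hEq⟩
      exact Fin.succAbove_ne i₀ j hEq
    have hIcard : J.card + 1 ≤ I.card := by
      rw [hIdef, Finset.card_insert_of_notMem hInotmem,
        Finset.card_image_of_injective J (Fin.succAbove_right_injective (p := i₀))]
    have hImem : ∀ idx ∈ I, (W ⟨x, p⟩) idx ∈ Set.range (W ⟨x + 1, q⟩) := by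
      intro idx hidx
      rw [hIdef, Finset.mem_insert] at hidx
      rcases hidx with h | hidx
      · refine ⟨i₀, ?_⟩
        rw [h, congrFun (hWcoe _) i₀, congrFun (hWcoe _) i₀, hLi₀, hLi₀]
      · obtain ⟨j, hjJ, rfl⟩ := Finset.mem_image.1 hidx
        obtain ⟨j', hj'⟩ := hJmem j hjJ
        refine ⟨i₀.succAbove j', ?_⟩
        rw [congrFun (hWcoe _) _, congrFun (hWcoe _) _, hLsA, hLsA, hj']
    have hcard := le_ncard_inter (W ⟨x, p⟩).injective I hImem
    omega
  have endR : ∀ p : r < r + 1,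
      m + 1 - 2 ≤ (Set.range (W ⟨r, p⟩) ∩ Set.range c).ncard := by
    intro p
    have hkkl : (⟨r, p⟩ : Fin (r + 1)) = Fin.last r := Fin.ext rfl
    have hmem : ∀ idx ∈ (Finset.univ : Finset (Fin (m + 1))),
        (W ⟨r, p⟩) idx ∈ Set.range c := by
      intro idx _
      rw [hkkl, congrFun (hWcoe (Fin.last r)) idx]
      obtain ⟨i', hi'⟩ := hLlast idx
      exact ⟨i', hi'.symm⟩
    have hcard := le_ncard_inter (W ⟨r, p⟩).injective Finset.univ hmem
    simp only [Finset.card_univ, Fintype.card_fin] at hcard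
    omega
  refine ⟨r + 2, S, ?_, ?_, ?_, ?_⟩
  · intro k
    rcases eq_or_ne k.val 0 with hk | hk
    · rw [hS0 k hk]; exact hb
    rcases eq_or_ne k.val (r + 2) with hk2 | hk2
    · rw [hSl k hk2]; exact hc
    · rw [hSW k (k.val - 1) (by omega) (by omega)]
      intro i j hij
      rw [congrFun (hWcoe _) i, congrFun (hWcoe _) j]
      exact hLorth _ i j hij
  · exact hS0 0 rfl
  · exact hSl (Fin.last (r + 2)) rfl
  · intro i
    have hcs : (i.castSucc : ℕ) = i.val := rfl
    have hsu : (i.succ : ℕ) = i.val + 1 := rfl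
    rcases Nat.lt_or_ge 0 i.val with hpos | hzero
    swap
    · rw [hS0 i.castSucc (by omega), hSW i.succ 0 (by omega) (by omega)]
      exact endL _
    rcases Nat.lt_or_ge i.val (r + 1) with hmid | hlast
    · rw [hSW i.castSucc (i.val - 1) (by omega) (by omega),
        hSW i.succ (i.val - 1 + 1) (by omega) (by omega)]
      exact middle (i.val - 1) (by omega) _ _
    · rw [hSW i.castSucc r (by omega) (by omega), hSl i.succ (by omega)]
      exact endR _

end Lift

section Atoms

variable {F : Type*} [Field F] {N : ℕ}

lemma dot_single_single (a b : Fin N) :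
    dotForm F N (Pi.single a 1) (Pi.single b 1) = if a = b then 1 else 0 := by
  rw [dotForm_single_right]
  rcases eq_or_ne a b with rfl | hab
  · simp
  · rw [Pi.single_eq_of_ne (Ne.symm hab), if_neg hab]

lemma dot_single_one (a : Fin N) :
    dotForm F N (Pi.single a 1) (fun _ => 1) = 1 := by
  rw [dotForm_apply, Finset.sum_eq_single a]
  · simp
  · intro i _ hia; rw [Pi.single_eq_of_ne hia, zero_mul]
  · intro ha; exact absurd (Finset.mem_univ a) ha

lemma dot_one_single (a : Fin N) :
    dotForm F N (fun _ => 1) (Pi.single a 1) = 1 := by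
  rw [dotForm_comm]; exact dot_single_one a

lemma dot_one_one [CharP F 2] (hN : Even N) :
    dotForm F N (fun _ => (1:F)) (fun _ => 1) = 0 := by
  rw [dotForm_apply]
  simp only [mul_one, Finset.sum_const, Finset.card_univ, Fintype.card_fin, nsmul_eq_mul]
  obtain ⟨k, rfl⟩ := hN
  push_cast
  have h2 : (2 : F) = 0 := CharTwo.two_eq_zero
  linear_combination (k : F) * h2

lemma orthoBasis_isOrtho {n : ℕ} (hn : n ≠ 0) (B : LinearMap.BilinForm F (Fin n → F))
    (v : Fin n → (Fin n → F)) (horth : ∀ i j, i ≠ j → B (v i) (v j) = 0)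
    (hani : ∀ i, B (v i) (v i) ≠ 0) : IsOrthoBasis B (orthoBasis hn B v horth hani) := by
  intro i j hij
  rw [congrFun (orthoBasis_coe hn B v horth hani) i,
    congrFun (orthoBasis_coe hn B v horth hani) j]
  exact horth i j hij

lemma exists_ne_zero_ne_one (F : Type*) [Field F] [Finite F] (hF : Nat.card F ≠ 2) :
    ∃ l : F, l ≠ 0 ∧ l ≠ 1 := by
  classical
  by_contra h
  push_neg at h
  letI := Fintype.ofFinite F
  have hsub : (Finset.univ : Finset F) ⊆ {0, 1} := by
    intro x _
    rcases eq_or_ne x 0 with rfl | hx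
    · simp
    · simp [h x hx]
  have hle : Fintype.card F ≤ 2 := by
    calc Fintype.card F = (Finset.univ : Finset F).card := (Finset.card_univ).symm
      _ ≤ ({0, 1} : Finset F).card := Finset.card_le_card hsub
      _ ≤ 2 := Finset.card_le_two
  have hgt : 1 < Fintype.card F := Fintype.one_lt_card
  have : Nat.card F = Fintype.card F := Nat.card_eq_fintype_card
  omega

end Atoms

/-- Let `F ≠ 𝔽₂` be a finite field of characteristic `2` and `n ≥ 4` even.  Assume any two
orthogonal bases of an inner product space over `F` of dimension smaller `n` are chain
equivalent.  Then in `⟨1⟩^{⊕ n}` (that is, `Fⁿ` with the dot product) the standard basis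
`e` is chain equivalent to the orthogonal basis `ê` with `ê_r = ∑_{i ≠ r} e_i`. -/
theorem standard_basis_chainEquiv_hat_basis {F : Type*} [Field F] [Finite F] [CharP F 2]
    (hF : Nat.card F ≠ 2) {n : ℕ} (hn : 4 ≤ n) (heven : Even n)
    (ih : ∀ m : ℕ, m < n → ∀ B : LinearMap.BilinForm F (Fin m → F),
      IsInnerProductSpace F (Fin m → F) B →
      ∀ b c : Module.Basis (Fin m) F (Fin m → F),
        IsOrthoBasis B b → IsOrthoBasis B c → ChainEquiv B b c) :
    ∃ hatb : Module.Basis (Fin n) F (Fin n → F),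
      (∀ r j : Fin n, hatb r j = if j = r then 0 else 1) ∧
      IsOrthoBasis (dotForm F n) hatb ∧
      ChainEquiv (dotForm F n) (Pi.basisFun F (Fin n)) hatb := by
  classical
  obtain ⟨m, rfl⟩ : ∃ m, n = m + 1 := ⟨n - 1, by omega⟩
  have hm : m ≠ 0 := by omega
  have hm1 : m + 1 ≠ 0 := Nat.succ_ne_zero m
  obtain ⟨lam, hl0, hl1⟩ := exists_ne_zero_ne_one F hF
  obtain ⟨lam', hinv⟩ : ∃ y, lam * y = 1 := ⟨lam⁻¹, mul_inv_cancel₀ hl0⟩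
  have h2 : (2 : F) = 0 := CharTwo.two_eq_zero
  have hl'1 : lam' + 1 ≠ 0 := by
    intro h
    apply hl1
    have : lam' = 1 := by linear_combination h - h2
    rw [this, mul_one] at hinv
    exact hinv
  -- indices
  obtain ⟨I0, hI0⟩ : ∃ I : Fin (m + 1), I = ⟨0, by omega⟩ := ⟨_, rfl⟩
  obtain ⟨I1, hI1⟩ : ∃ I : Fin (m + 1), I = ⟨1, by omega⟩ := ⟨_, rfl⟩
  obtain ⟨I2, hI2⟩ : ∃ I : Fin (m + 1), I = ⟨2, by omega⟩ := ⟨_, rfl⟩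
  obtain ⟨I3, hI3⟩ : ∃ I : Fin (m + 1), I = ⟨3, by omega⟩ := ⟨_, rfl⟩
  have h01 : I0 ≠ I1 := by rw [hI0, hI1]; exact Fin.ne_of_val_ne (by norm_num)
  have h02 : I0 ≠ I2 := by rw [hI0, hI2]; exact Fin.ne_of_val_ne (by norm_num)
  have h03 : I0 ≠ I3 := by rw [hI0, hI3]; exact Fin.ne_of_val_ne (by norm_num)
  have h12 : I1 ≠ I2 := by rw [hI1, hI2]; exact Fin.ne_of_val_ne (by norm_num)
  have h13 : I1 ≠ I3 := by rw [hI1, hI3]; exact Fin.ne_of_val_ne (by norm_num)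
  have h23 : I2 ≠ I3 := by rw [hI2, hI3]; exact Fin.ne_of_val_ne (by norm_num)
  have h10 := h01.symm; have h20 := h02.symm; have h30 := h03.symm
  have h21 := h12.symm; have h31 := h13.symm; have h32 := h23.symm
  -- vectors
  obtain ⟨P, hP⟩ : ∃ P : Fin (m + 1) → (Fin (m + 1) → F), P = fun k => Pi.single k 1 := ⟨_, rfl⟩
  obtain ⟨wv, hwv⟩ : ∃ wv : Fin (m + 1) → F, wv = fun _ => 1 := ⟨_, rfl⟩
  have dPP : ∀ a b : Fin (m + 1), dotForm F (m + 1) (P a) (P b) = if a = b then 1 else 0 := by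
    intro a b
    rw [hP]
    exact dot_single_single a b
  have dPw : ∀ a : Fin (m + 1), dotForm F (m + 1) (P a) wv = 1 := by
    intro a
    rw [hP, hwv]
    exact dot_single_one a
  have dwP : ∀ a : Fin (m + 1), dotForm F (m + 1) wv (P a) = 1 := by
    intro a
    rw [hP, hwv]
    exact dot_one_single a
  have dww : dotForm F (m + 1) wv wv = 0 := by
    rw [hwv]
    exact dot_one_one heven
  have flip : ∀ x y : Fin (m + 1) → F,
      dotForm F (m + 1) x y = 0 → dotForm F (m + 1) y x = 0 := by
    intro x y h
    rw [dotForm_comm]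
    exact h
  obtain ⟨z, hz⟩ : ∃ z : Fin (m + 1) → F, z = lam • P I1 + P I2 + P I3 := ⟨_, rfl⟩
  obtain ⟨u, hu⟩ : ∃ u : Fin (m + 1) → F, u = lam' • P I1 + P I2 := ⟨_, rfl⟩
  obtain ⟨u', hu'⟩ : ∃ u' : Fin (m + 1) → F,
      u' = lam' • P I1 + (lam' * lam') • P I2 + (lam' * lam' + 1) • P I3 := ⟨_, rfl⟩
  obtain ⟨ehat, hehat⟩ : ∃ ehat : Fin (m + 1) → F, ehat = wv + P I1 := ⟨_, rfl⟩
  obtain ⟨g1, hg1⟩ : ∃ g1 : Fin (m + 1) → F,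
      g1 = lam • P I0 + P I1 + lam' • P I2 + (lam + lam') • P I3 := ⟨_, rfl⟩
  obtain ⟨g2, hg2⟩ : ∃ g2 : Fin (m + 1) → F, g2 = wv + (lam + 1) • (P I0 + P I3) + P I2 := ⟨_, rfl⟩
  obtain ⟨G, hG⟩ : ∃ G : Fin (m + 1) → (Fin (m + 1) → F),
      G = fun i => (lam + 1) • (P I0 + P I3) + P I1 + P I2 + P i := ⟨_, rfl⟩
  -- dot product table for c1
  have t01 : dotForm F (m + 1) (P I0) z = 0 := by
    rw [hz]
    simp [map_add, map_smul, LinearMap.add_apply, LinearMap.smul_apply, smul_eq_mul,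
      dPP, h01, h02, h03]
  have t02 : dotForm F (m + 1) (P I0) u = 0 := by
    rw [hu]
    simp [map_add, map_smul, LinearMap.add_apply, LinearMap.smul_apply, smul_eq_mul,
      dPP, h01, h02]
  have t03 : dotForm F (m + 1) (P I0) u' = 0 := by
    rw [hu']
    simp [map_add, map_smul, LinearMap.add_apply, LinearMap.smul_apply, smul_eq_mul,
      dPP, h01, h02, h03]
  have t44 : ∀ a b : Fin (m + 1), a ≠ b → dotForm F (m + 1) (P a) (P b) = 0 := by
    intro a b hab
    rw [dPP, if_neg hab]
  have t14 : ∀ j : Fin (m + 1), j ≠ I1 → j ≠ I2 → j ≠ I3 →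
      dotForm F (m + 1) z (P j) = 0 := by
    intro j hj1 hj2 hj3
    rw [hz]
    simp [map_add, map_smul, LinearMap.add_apply, LinearMap.smul_apply, smul_eq_mul,
      dPP, hj1.symm, hj2.symm, hj3.symm]
  have t24 : ∀ j : Fin (m + 1), j ≠ I1 → j ≠ I2 →
      dotForm F (m + 1) u (P j) = 0 := by
    intro j hj1 hj2
    rw [hu]
    simp [map_add, map_smul, LinearMap.add_apply, LinearMap.smul_apply, smul_eq_mul,
      dPP, hj1.symm, hj2.symm]
  have t34 : ∀ j : Fin (m + 1), j ≠ I1 → j ≠ I2 → j ≠ I3 →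
      dotForm F (m + 1) u' (P j) = 0 := by
    intro j hj1 hj2 hj3
    rw [hu']
    simp [map_add, map_smul, LinearMap.add_apply, LinearMap.smul_apply, smul_eq_mul,
      dPP, hj1.symm, hj2.symm, hj3.symm]
  have t12 : dotForm F (m + 1) z u = 0 := by
    rw [hz, hu]
    simp only [map_add, map_smul, LinearMap.add_apply, LinearMap.smul_apply, smul_eq_mul,
      dPP, h12, h13, h21, h23, h31, h32, if_pos rfl, if_neg, ne_eq, not_false_iff]
    simp only [if_true, mul_one, mul_zero, add_zero, zero_add]
    linear_combination hinv + h2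
  have t13 : dotForm F (m + 1) z u' = 0 := by
    rw [hz, hu']
    simp only [map_add, map_smul, LinearMap.add_apply, LinearMap.smul_apply, smul_eq_mul,
      dPP, h12, h13, h21, h23, h31, h32, if_pos rfl, if_neg, ne_eq, not_false_iff]
    simp only [if_true, mul_one, mul_zero, add_zero, zero_add]
    linear_combination hinv + h2 + (lam' * lam') * h2
  have t23 : dotForm F (m + 1) u u' = 0 := by
    rw [hu, hu']
    simp only [map_add, map_smul, LinearMap.add_apply, LinearMap.smul_apply, smul_eq_mul,
      dPP, h12, h13, h21, h23, h31, h32, if_pos rfl, if_neg, ne_eq, not_false_iff]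
    simp only [if_true, mul_one, mul_zero, add_zero, zero_add]
    linear_combination (lam' * lam') * h2
  have nP : ∀ a : Fin (m + 1), dotForm F (m + 1) (P a) (P a) = 1 := by
    intro a
    rw [dPP, if_pos rfl]
  have nz : dotForm F (m + 1) z z = lam * lam := by
    rw [hz]
    simp only [map_add, map_smul, LinearMap.add_apply, LinearMap.smul_apply, smul_eq_mul,
      dPP, h12, h13, h21, h23, h31, h32, if_pos rfl, if_neg, ne_eq, not_false_iff]
    simp only [if_true, mul_one, mul_zero, add_zero, zero_add]
    linear_combination h2
  have nu : dotForm F (m + 1) u u = lam' * lam' + 1 := by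
    rw [hu]
    simp only [map_add, map_smul, LinearMap.add_apply, LinearMap.smul_apply, smul_eq_mul,
      dPP, h12, h21, if_pos rfl, if_neg, ne_eq, not_false_iff]
    simp only [if_true, mul_one, mul_zero, add_zero, zero_add]
  have nu' : dotForm F (m + 1) u' u' = lam' * lam' + 1 := by
    rw [hu']
    simp only [map_add, map_smul, LinearMap.add_apply, LinearMap.smul_apply, smul_eq_mul,
      dPP, h12, h13, h21, h23, h31, h32, if_pos rfl, if_neg, ne_eq, not_false_iff]
    simp only [if_true, mul_one, mul_zero, add_zero, zero_add]
    linear_combination (lam' * lam' * lam' * lam' + lam' * lam') * h2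
  have hlam2 : lam * lam ≠ 0 := mul_ne_zero hl0 hl0
  have hlam'2 : lam' * lam' + 1 ≠ 0 := by
    have : lam' * lam' + 1 = (lam' + 1) * (lam' + 1) := by linear_combination -lam' * h2
    rw [this]
    exact mul_ne_zero hl'1 hl'1
  -- dot product table for c2
  have s01 : dotForm F (m + 1) z ehat = 0 := by
    rw [hz, hehat]
    simp only [map_add, map_smul, LinearMap.add_apply, LinearMap.smul_apply, smul_eq_mul,
      dPP, dPw, dwP, dww, h12, h13, h21, h23, h31, h32, if_pos rfl, if_neg, ne_eq,
      not_false_iff, if_true, mul_one, mul_zero, add_zero, zero_add, one_mul, zero_mul]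
    linear_combination (lam + 1) * h2
  have s02 : dotForm F (m + 1) z g1 = 0 := by
    rw [hz, hg1]
    simp only [map_add, map_smul, LinearMap.add_apply, LinearMap.smul_apply, smul_eq_mul,
      dPP, dPw, dwP, dww, h01, h02, h03, h10, h20, h30, h12, h13, h21, h23, h31, h32,
      if_pos rfl, if_neg, ne_eq, not_false_iff, if_true, mul_one, mul_zero, add_zero,
      zero_add, one_mul, zero_mul]
    linear_combination (lam + lam') * h2
  have s03 : dotForm F (m + 1) z g2 = 0 := by
    rw [hz, hg2]
    simp only [map_add, map_smul, LinearMap.add_apply, LinearMap.smul_apply, smul_eq_mul,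
      dPP, dPw, dwP, dww, h01, h02, h03, h10, h20, h30, h12, h13, h21, h23, h31, h32,
      if_pos rfl, if_neg, ne_eq, not_false_iff, if_true, mul_one, mul_zero, add_zero,
      zero_add, one_mul, zero_mul]
    linear_combination (lam + 2) * h2
  have s04 : ∀ j : Fin (m + 1), j ≠ I0 → j ≠ I1 → j ≠ I2 → j ≠ I3 →
      dotForm F (m + 1) z (G j) = 0 := by
    intro j hj0 hj1 hj2 hj3
    rw [hz]
    simp only [hG]
    simp only [map_add, map_smul, LinearMap.add_apply, LinearMap.smul_apply, smul_eq_mul,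
      dPP, dPw, dwP, dww, h01, h02, h03, h10, h20, h30, h12, h13, h21, h23, h31, h32,
      hj0, hj1, hj2, hj3, hj0.symm, hj1.symm, hj2.symm, hj3.symm,
      if_pos rfl, if_neg, ne_eq, not_false_iff, if_true, mul_one, mul_zero, add_zero,
      zero_add, one_mul, zero_mul]
    linear_combination (lam + 1) * h2
  have s12 : dotForm F (m + 1) ehat g1 = 0 := by
    rw [hehat, hg1]
    simp only [map_add, map_smul, LinearMap.add_apply, LinearMap.smul_apply, smul_eq_mul,
      dPP, dPw, dwP, dww, h01, h02, h03, h10, h20, h30, h12, h13, h21, h23, h31, h32,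
      if_pos rfl, if_neg, ne_eq, not_false_iff, if_true, mul_one, mul_zero, add_zero,
      zero_add, one_mul, zero_mul]
    linear_combination (lam + lam' + 1) * h2
  have s13 : dotForm F (m + 1) ehat g2 = 0 := by
    rw [hehat, hg2]
    simp only [map_add, map_smul, LinearMap.add_apply, LinearMap.smul_apply, smul_eq_mul,
      dPP, dPw, dwP, dww, h01, h02, h03, h10, h20, h30, h12, h13, h21, h23, h31, h32,
      if_pos rfl, if_neg, ne_eq, not_false_iff, if_true, mul_one, mul_zero, add_zero,
      zero_add, one_mul, zero_mul]
    linear_combination (lam + 2) * h2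
  have s14 : ∀ j : Fin (m + 1), j ≠ I0 → j ≠ I1 → j ≠ I2 → j ≠ I3 →
      dotForm F (m + 1) ehat (G j) = 0 := by
    intro j hj0 hj1 hj2 hj3
    rw [hehat]
    simp only [hG]
    simp only [map_add, map_smul, LinearMap.add_apply, LinearMap.smul_apply, smul_eq_mul,
      dPP, dPw, dwP, dww, h01, h02, h03, h10, h20, h30, h12, h13, h21, h23, h31, h32,
      hj0, hj1, hj2, hj3, hj0.symm, hj1.symm, hj2.symm, hj3.symm,
      if_pos rfl, if_neg, ne_eq, not_false_iff, if_true, mul_one, mul_zero, add_zero,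
      zero_add, one_mul, zero_mul]
    linear_combination (lam + 3) * h2
  have s23 : dotForm F (m + 1) g1 g2 = 0 := by
    rw [hg1, hg2]
    simp only [map_add, map_smul, LinearMap.add_apply, LinearMap.smul_apply, smul_eq_mul,
      dPP, dPw, dwP, dww, h01, h02, h03, h10, h20, h30, h12, h13, h21, h23, h31, h32,
      if_pos rfl, if_neg, ne_eq, not_false_iff, if_true, mul_one, mul_zero, add_zero,
      zero_add, one_mul, zero_mul]
    linear_combination hinv + (lam * lam + 2 * lam + 2 * lam' + 1) * h2
  have s24 : ∀ j : Fin (m + 1), j ≠ I0 → j ≠ I1 → j ≠ I2 → j ≠ I3 →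
      dotForm F (m + 1) g1 (G j) = 0 := by
    intro j hj0 hj1 hj2 hj3
    rw [hg1]
    simp only [hG]
    simp only [map_add, map_smul, LinearMap.add_apply, LinearMap.smul_apply, smul_eq_mul,
      dPP, dPw, dwP, dww, h01, h02, h03, h10, h20, h30, h12, h13, h21, h23, h31, h32,
      hj0, hj1, hj2, hj3, hj0.symm, hj1.symm, hj2.symm, hj3.symm,
      if_pos rfl, if_neg, ne_eq, not_false_iff, if_true, mul_one, mul_zero, add_zero,
      zero_add, one_mul, zero_mul]
    linear_combination hinv + (lam * lam + lam + lam' + 1) * h2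
  have s34 : ∀ j : Fin (m + 1), j ≠ I0 → j ≠ I1 → j ≠ I2 → j ≠ I3 →
      dotForm F (m + 1) g2 (G j) = 0 := by
    intro j hj0 hj1 hj2 hj3
    rw [hg2]
    simp only [hG]
    simp only [map_add, map_smul, LinearMap.add_apply, LinearMap.smul_apply, smul_eq_mul,
      dPP, dPw, dwP, dww, h01, h02, h03, h10, h20, h30, h12, h13, h21, h23, h31, h32,
      hj0, hj1, hj2, hj3, hj0.symm, hj1.symm, hj2.symm, hj3.symm,
      if_pos rfl, if_neg, ne_eq, not_false_iff, if_true, mul_one, mul_zero, add_zero,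
      zero_add, one_mul, zero_mul]
    linear_combination ((lam + 1) * (lam + 1) + lam + 3) * h2
  have s44 : ∀ a b : Fin (m + 1), a ≠ b → a ≠ I0 → a ≠ I1 → a ≠ I2 → a ≠ I3 →
      b ≠ I0 → b ≠ I1 → b ≠ I2 → b ≠ I3 →
      dotForm F (m + 1) (G a) (G b) = 0 := by
    intro a b hab ha0 ha1 ha2 ha3 hb0 hb1 hb2 hb3
    simp only [hG]
    simp only [map_add, map_smul, LinearMap.add_apply, LinearMap.smul_apply, smul_eq_mul,
      dPP, dPw, dwP, dww, h01, h02, h03, h10, h20, h30, h12, h13, h21, h23, h31, h32,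
      ha0, ha1, ha2, ha3, ha0.symm, ha1.symm, ha2.symm, ha3.symm,
      hb0, hb1, hb2, hb3, hb0.symm, hb1.symm, hb2.symm, hb3.symm, hab,
      if_pos rfl, if_neg, ne_eq, not_false_iff, if_true, mul_one, mul_zero, add_zero,
      zero_add, one_mul, zero_mul]
    linear_combination ((lam + 1) * (lam + 1) + 1) * h2
  have nehat : dotForm F (m + 1) ehat ehat = 1 := by
    rw [hehat]
    simp only [map_add, map_smul, LinearMap.add_apply, LinearMap.smul_apply, smul_eq_mul,
      dPP, dPw, dwP, dww, if_pos rfl, if_true, mul_one, mul_zero, add_zero, zero_add,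
      one_mul, zero_mul]
    linear_combination h2
  have ng1 : dotForm F (m + 1) g1 g1 = 1 := by
    rw [hg1]
    simp only [map_add, map_smul, LinearMap.add_apply, LinearMap.smul_apply, smul_eq_mul,
      dPP, dPw, dwP, dww, h01, h02, h03, h10, h20, h30, h12, h13, h21, h23, h31, h32,
      if_pos rfl, if_neg, ne_eq, not_false_iff, if_true, mul_one, mul_zero, add_zero,
      zero_add, one_mul, zero_mul]
    linear_combination (lam * lam + lam' * lam' + lam * lam') * h2
  have ng2 : dotForm F (m + 1) g2 g2 = 1 := by
    rw [hg2]
    simp only [map_add, map_smul, LinearMap.add_apply, LinearMap.smul_apply, smul_eq_mul,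
      dPP, dPw, dwP, dww, h01, h02, h03, h10, h20, h30, h12, h13, h21, h23, h31, h32,
      if_pos rfl, if_neg, ne_eq, not_false_iff, if_true, mul_one, mul_zero, add_zero,
      zero_add, one_mul, zero_mul]
    linear_combination ((lam + 1) * (lam + 1) + 2 * lam + 3) * h2
  have nG : ∀ j : Fin (m + 1), j ≠ I0 → j ≠ I1 → j ≠ I2 → j ≠ I3 →
      dotForm F (m + 1) (G j) (G j) = 1 := by
    intro j hj0 hj1 hj2 hj3
    simp only [hG]
    simp only [map_add, map_smul, LinearMap.add_apply, LinearMap.smul_apply, smul_eq_mul,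
      dPP, dPw, dwP, dww, h01, h02, h03, h10, h20, h30, h12, h13, h21, h23, h31, h32,
      hj0, hj1, hj2, hj3, hj0.symm, hj1.symm, hj2.symm, hj3.symm,
      if_pos rfl, if_neg, ne_eq, not_false_iff, if_true, mul_one, mul_zero, add_zero,
      zero_add, one_mul, zero_mul]
    linear_combination ((lam + 1) * (lam + 1) + 1) * h2
  -- the hat family
  obtain ⟨hatv, hhatv⟩ : ∃ v : Fin (m + 1) → (Fin (m + 1) → F),
      v = fun r => fun j => if j = r then 0 else 1 := ⟨_, rfl⟩
  have hhatw : ∀ r, hatv r = wv + P r := by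
    intro r
    funext j
    simp only [hhatv, hwv, hP, Pi.add_apply]
    rcases eq_or_ne j r with rfl | hjr
    · rw [if_pos rfl, Pi.single_eq_same]
      linear_combination -h2
    · rw [if_neg hjr, Pi.single_eq_of_ne hjr, add_zero]
  have horthh : ∀ r t : Fin (m + 1), r ≠ t →
      dotForm F (m + 1) (hatv r) (hatv t) = 0 := by
    intro r t hrt
    rw [hhatw r, hhatw t]
    simp only [map_add, LinearMap.add_apply, dPP, dPw, dwP, dww, hrt,
      if_pos rfl, if_neg, ne_eq, not_false_iff, if_true, mul_one, mul_zero, add_zero,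
      zero_add, one_mul, zero_mul]
    linear_combination h2
  have nhat : ∀ r : Fin (m + 1), dotForm F (m + 1) (hatv r) (hatv r) = 1 := by
    intro r
    rw [hhatw r]
    simp only [map_add, LinearMap.add_apply, dPP, dPw, dwP, dww,
      if_pos rfl, if_true, mul_one, mul_zero, add_zero, zero_add, one_mul, zero_mul]
    linear_combination h2
  -- the two intermediate families
  obtain ⟨c1v, hc1v⟩ : ∃ v : Fin (m + 1) → (Fin (m + 1) → F),
      v = fun i => if i = I0 then P I0 else if i = I1 then z else if i = I2 then u
        else if i = I3 then u' else P i := ⟨_, rfl⟩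
  have ec10 : c1v I0 = P I0 := by simp only [hc1v]; rw [if_true]
  have ec11 : c1v I1 = z := by simp only [hc1v]; rw [if_neg h10, if_true]
  have ec12 : c1v I2 = u := by simp only [hc1v]; rw [if_neg h20, if_neg h21, if_true]
  have ec13 : c1v I3 = u' := by
    simp only [hc1v]; rw [if_neg h30, if_neg h31, if_neg h32, if_true]
  have ec14 : ∀ i, i ≠ I0 → i ≠ I1 → i ≠ I2 → i ≠ I3 → c1v i = P i := by
    intro i hi0 hi1 hi2 hi3
    simp only [hc1v]; rw [if_neg hi0, if_neg hi1, if_neg hi2, if_neg hi3]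
  obtain ⟨c2v, hc2v⟩ : ∃ v : Fin (m + 1) → (Fin (m + 1) → F),
      v = fun i => if i = I0 then z else if i = I1 then ehat else if i = I2 then g1
        else if i = I3 then g2 else G i := ⟨_, rfl⟩
  have ec20 : c2v I0 = z := by simp only [hc2v]; rw [if_true]
  have ec21 : c2v I1 = ehat := by simp only [hc2v]; rw [if_neg h10, if_true]
  have ec22 : c2v I2 = g1 := by simp only [hc2v]; rw [if_neg h20, if_neg h21, if_true]
  have ec23 : c2v I3 = g2 := by
    simp only [hc2v]; rw [if_neg h30, if_neg h31, if_neg h32, if_true]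
  have ec24 : ∀ i, i ≠ I0 → i ≠ I1 → i ≠ I2 → i ≠ I3 → c2v i = G i := by
    intro i hi0 hi1 hi2 hi3
    simp only [hc2v]; rw [if_neg hi0, if_neg hi1, if_neg hi2, if_neg hi3]
  -- orthogonality of c1
  have horth1 : ∀ i j, i ≠ j → dotForm F (m + 1) (c1v i) (c1v j) = 0 := by
    intro i j hij
    rcases eq_or_ne I0 i with rfl | hi0
    · rw [ec10]
      rcases eq_or_ne I0 j with rfl | hj0
      · exact absurd rfl hij
      rcases eq_or_ne I1 j with rfl | hj1
      · rw [ec11]; exact t01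
      rcases eq_or_ne I2 j with rfl | hj2
      · rw [ec12]; exact t02
      rcases eq_or_ne I3 j with rfl | hj3
      · rw [ec13]; exact t03
      · rw [ec14 j hj0.symm hj1.symm hj2.symm hj3.symm]; exact t44 I0 j hj0
    rcases eq_or_ne I1 i with rfl | hi1
    · rw [ec11]
      rcases eq_or_ne I0 j with rfl | hj0
      · rw [ec10]; exact flip _ _ t01
      rcases eq_or_ne I1 j with rfl | hj1
      · exact absurd rfl hij
      rcases eq_or_ne I2 j with rfl | hj2
      · rw [ec12]; exact t12
      rcases eq_or_ne I3 j with rfl | hj3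
      · rw [ec13]; exact t13
      · rw [ec14 j hj0.symm hj1.symm hj2.symm hj3.symm]; exact t14 j hj1.symm hj2.symm hj3.symm
    rcases eq_or_ne I2 i with rfl | hi2
    · rw [ec12]
      rcases eq_or_ne I0 j with rfl | hj0
      · rw [ec10]; exact flip _ _ t02
      rcases eq_or_ne I1 j with rfl | hj1
      · rw [ec11]; exact flip _ _ t12
      rcases eq_or_ne I2 j with rfl | hj2
      · exact absurd rfl hij
      rcases eq_or_ne I3 j with rfl | hj3
      · rw [ec13]; exact t23
      · rw [ec14 j hj0.symm hj1.symm hj2.symm hj3.symm]; exact t24 j hj1.symm hj2.symm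
    rcases eq_or_ne I3 i with rfl | hi3
    · rw [ec13]
      rcases eq_or_ne I0 j with rfl | hj0
      · rw [ec10]; exact flip _ _ t03
      rcases eq_or_ne I1 j with rfl | hj1
      · rw [ec11]; exact flip _ _ t13
      rcases eq_or_ne I2 j with rfl | hj2
      · rw [ec12]; exact flip _ _ t23
      rcases eq_or_ne I3 j with rfl | hj3
      · exact absurd rfl hij
      · rw [ec14 j hj0.symm hj1.symm hj2.symm hj3.symm]; exact t34 j hj1.symm hj2.symm hj3.symm
    · rw [ec14 i hi0.symm hi1.symm hi2.symm hi3.symm]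
      rcases eq_or_ne I0 j with rfl | hj0
      · rw [ec10]; exact t44 i I0 hi0.symm
      rcases eq_or_ne I1 j with rfl | hj1
      · rw [ec11]; exact flip _ _ (t14 i hi1.symm hi2.symm hi3.symm)
      rcases eq_or_ne I2 j with rfl | hj2
      · rw [ec12]; exact flip _ _ (t24 i hi1.symm hi2.symm)
      rcases eq_or_ne I3 j with rfl | hj3
      · rw [ec13]; exact flip _ _ (t34 i hi1.symm hi2.symm hi3.symm)
      · rw [ec14 j hj0.symm hj1.symm hj2.symm hj3.symm]; exact t44 i j hij
  have hani1 : ∀ i, dotForm F (m + 1) (c1v i) (c1v i) ≠ 0 := by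
    intro i
    rcases eq_or_ne I0 i with rfl | hi0
    · rw [ec10, nP]; exact one_ne_zero
    rcases eq_or_ne I1 i with rfl | hi1
    · rw [ec11, nz]; exact hlam2
    rcases eq_or_ne I2 i with rfl | hi2
    · rw [ec12, nu]; exact hlam'2
    rcases eq_or_ne I3 i with rfl | hi3
    · rw [ec13, nu']; exact hlam'2
    · rw [ec14 i hi0.symm hi1.symm hi2.symm hi3.symm, nP]; exact one_ne_zero
  -- orthogonality of c2
  have horth2 : ∀ i j, i ≠ j → dotForm F (m + 1) (c2v i) (c2v j) = 0 := by
    intro i j hij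
    rcases eq_or_ne I0 i with rfl | hi0
    · rw [ec20]
      rcases eq_or_ne I0 j with rfl | hj0
      · exact absurd rfl hij
      rcases eq_or_ne I1 j with rfl | hj1
      · rw [ec21]; exact s01
      rcases eq_or_ne I2 j with rfl | hj2
      · rw [ec22]; exact s02
      rcases eq_or_ne I3 j with rfl | hj3
      · rw [ec23]; exact s03
      · rw [ec24 j hj0.symm hj1.symm hj2.symm hj3.symm]; exact s04 j hj0.symm hj1.symm hj2.symm hj3.symm
    rcases eq_or_ne I1 i with rfl | hi1
    · rw [ec21]
      rcases eq_or_ne I0 j with rfl | hj0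
      · rw [ec20]; exact flip _ _ s01
      rcases eq_or_ne I1 j with rfl | hj1
      · exact absurd rfl hij
      rcases eq_or_ne I2 j with rfl | hj2
      · rw [ec22]; exact s12
      rcases eq_or_ne I3 j with rfl | hj3
      · rw [ec23]; exact s13
      · rw [ec24 j hj0.symm hj1.symm hj2.symm hj3.symm]; exact s14 j hj0.symm hj1.symm hj2.symm hj3.symm
    rcases eq_or_ne I2 i with rfl | hi2
    · rw [ec22]
      rcases eq_or_ne I0 j with rfl | hj0
      · rw [ec20]; exact flip _ _ s02
      rcases eq_or_ne I1 j with rfl | hj1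
      · rw [ec21]; exact flip _ _ s12
      rcases eq_or_ne I2 j with rfl | hj2
      · exact absurd rfl hij
      rcases eq_or_ne I3 j with rfl | hj3
      · rw [ec23]; exact s23
      · rw [ec24 j hj0.symm hj1.symm hj2.symm hj3.symm]; exact s24 j hj0.symm hj1.symm hj2.symm hj3.symm
    rcases eq_or_ne I3 i with rfl | hi3
    · rw [ec23]
      rcases eq_or_ne I0 j with rfl | hj0
      · rw [ec20]; exact flip _ _ s03
      rcases eq_or_ne I1 j with rfl | hj1
      · rw [ec21]; exact flip _ _ s13
      rcases eq_or_ne I2 j with rfl | hj2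
      · rw [ec22]; exact flip _ _ s23
      rcases eq_or_ne I3 j with rfl | hj3
      · exact absurd rfl hij
      · rw [ec24 j hj0.symm hj1.symm hj2.symm hj3.symm]; exact s34 j hj0.symm hj1.symm hj2.symm hj3.symm
    · rw [ec24 i hi0.symm hi1.symm hi2.symm hi3.symm]
      rcases eq_or_ne I0 j with rfl | hj0
      · rw [ec20]; exact flip _ _ (s04 i hi0.symm hi1.symm hi2.symm hi3.symm)
      rcases eq_or_ne I1 j with rfl | hj1
      · rw [ec21]; exact flip _ _ (s14 i hi0.symm hi1.symm hi2.symm hi3.symm)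
      rcases eq_or_ne I2 j with rfl | hj2
      · rw [ec22]; exact flip _ _ (s24 i hi0.symm hi1.symm hi2.symm hi3.symm)
      rcases eq_or_ne I3 j with rfl | hj3
      · rw [ec23]; exact flip _ _ (s34 i hi0.symm hi1.symm hi2.symm hi3.symm)
      · rw [ec24 j hj0.symm hj1.symm hj2.symm hj3.symm]
        exact s44 i j hij hi0.symm hi1.symm hi2.symm hi3.symm hj0.symm hj1.symm hj2.symm hj3.symm
  have hani2 : ∀ i, dotForm F (m + 1) (c2v i) (c2v i) ≠ 0 := by
    intro i
    rcases eq_or_ne I0 i with rfl | hi0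
    · rw [ec20, nz]; exact hlam2
    rcases eq_or_ne I1 i with rfl | hi1
    · rw [ec21, nehat]; exact one_ne_zero
    rcases eq_or_ne I2 i with rfl | hi2
    · rw [ec22, ng1]; exact one_ne_zero
    rcases eq_or_ne I3 i with rfl | hi3
    · rw [ec23, ng2]; exact one_ne_zero
    · rw [ec24 i hi0.symm hi1.symm hi2.symm hi3.symm, nG i hi0.symm hi1.symm hi2.symm hi3.symm]; exact one_ne_zero
  have horthh' : ∀ i j, i ≠ j → dotForm F (m + 1) (hatv i) (hatv j) = 0 :=
    fun i j hij => horthh i j hij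
  have hanih : ∀ i, dotForm F (m + 1) (hatv i) (hatv i) ≠ 0 := by
    intro i
    rw [nhat i]
    exact one_ne_zero
  -- the three bases
  obtain ⟨c1b, hc1bcoe⟩ : ∃ bb : Module.Basis (Fin (m + 1)) F (Fin (m + 1) → F), ⇑bb = c1v :=
    ⟨orthoBasis hm1 (dotForm F (m + 1)) c1v horth1 hani1, orthoBasis_coe _ _ _ _ _⟩
  obtain ⟨c2b, hc2bcoe⟩ : ∃ bb : Module.Basis (Fin (m + 1)) F (Fin (m + 1) → F), ⇑bb = c2v :=
    ⟨orthoBasis hm1 (dotForm F (m + 1)) c2v horth2 hani2, orthoBasis_coe _ _ _ _ _⟩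
  obtain ⟨hatb, hhatbcoe⟩ : ∃ bb : Module.Basis (Fin (m + 1)) F (Fin (m + 1) → F), ⇑bb = hatv :=
    ⟨orthoBasis hm1 (dotForm F (m + 1)) hatv horthh' hanih, orthoBasis_coe _ _ _ _ _⟩
  have ho1b : IsOrthoBasis (dotForm F (m + 1)) c1b := by
    intro i j hij
    rw [congrFun hc1bcoe i, congrFun hc1bcoe j]
    exact horth1 i j hij
  have ho2b : IsOrthoBasis (dotForm F (m + 1)) c2b := by
    intro i j hij
    rw [congrFun hc2bcoe i, congrFun hc2bcoe j]
    exact horth2 i j hij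
  have hohatb : IsOrthoBasis (dotForm F (m + 1)) hatb := by
    intro i j hij
    rw [congrFun hhatbcoe i, congrFun hhatbcoe j]
    exact horthh' i j hij
  have he : IsOrthoBasis (dotForm F (m + 1)) (Pi.basisFun F (Fin (m + 1))) := by
    intro i j hij
    rw [Pi.basisFun_apply, Pi.basisFun_apply, dot_single_single]
    exact if_neg hij
  -- the three lifting steps
  have ih' : ∀ B' : LinearMap.BilinForm F (Fin m → F), IsInnerProductSpace F (Fin m → F) B' →
      ∀ b c : Module.Basis (Fin m) F (Fin m → F), IsOrthoBasis B' b → IsOrthoBasis B' c →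
        ChainEquiv B' b c := ih m (by omega)
  have hv1 : (Pi.basisFun F (Fin (m + 1))) I0 = c1b I0 := by
    rw [Pi.basisFun_apply, congrFun hc1bcoe I0, ec10]
    simp only [hP]
  have hv2 : c1b I1 = c2b I0 := by
    rw [congrFun hc1bcoe I1, congrFun hc2bcoe I0, ec11, ec20]
  have hv3 : c2b I1 = hatb I1 := by
    rw [congrFun hc2bcoe I1, congrFun hhatbcoe I1, ec21, hhatw I1, hehat]
  have step1 := lift_chain hm ih' (Pi.basisFun F (Fin (m + 1))) c1b he ho1b I0 I0 hv1
  have step2 := lift_chain hm ih' c1b c2b ho1b ho2b I1 I0 hv2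
  have step3 := lift_chain hm ih' c2b hatb ho2b hohatb I1 I1 hv3
  refine ⟨hatb, ?_, hohatb, chainEquiv_trans step1 (chainEquiv_trans step2 step3)⟩
  intro r j
  rw [congrFun hhatbcoe r]
  simp only [hhatv]
end
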